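/- arXiv:0803.0225 — 4 statements merged into one kernel-verified Lean document; each statement's English description precedes it below -/
import Mathlib

section
/- The number of forests consisting of (k+1) rooted b-uniform hypertrees with s hyperedges and n = s(b-1)+k+1 labeled vertices equals C(n, k+1) · (k+1) · ((n-k-1)! / (((b-1)!)^s · s!)) · n^{s-1}. -/
/-- Two vertices are linked if some hyperedge contains both. -/
def link {n : ℕ} (E : Finset (Finset (Fin n))) (x y : Fin n) : Prop :=
  ∃ e ∈ E, x ∈ e ∧ y ∈ e

/-- Reachability in the hypergraph. -/
def reaches {n : ℕ} (E : Finset (Finset (Fin n))) (x y : Fin n) : Prop :=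
  Relation.ReflTransGen (link E) x y

/-- All hyperedges have exactly `b` vertices. -/
def Uniform {n : ℕ} (b : ℕ) (E : Finset (Finset (Fin n))) : Prop :=
  ∀ e ∈ E, e.card = b

/-- Number of hyperedges lying inside the connected component of `v`. -/
noncomputable def compEdges {n : ℕ} (E : Finset (Finset (Fin n))) (v : Fin n) : ℕ :=
  ((E : Set (Finset (Fin n))) ∩ {e | ∀ x ∈ e, reaches E v x}).ncard

/-- Number of vertices in the connected component of `v`. -/
noncomputable def compSize {n : ℕ} (E : Finset (Finset (Fin n))) (v : Fin n) : ℕ :=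
  {w | reaches E v w}.ncard

/-- `(E, R)` is a forest of rooted `b`-uniform hypertrees: every hyperedge has `b`
vertices, every vertex is reachable from exactly one root, and each connected
component is a hypertree (excess `-1`, i.e. `(b-1)·#edges + 1 = #vertices`). -/
noncomputable def IsForestRHT {n : ℕ} (b : ℕ) (E : Finset (Finset (Fin n)))
    (R : Finset (Fin n)) : Prop :=
  Uniform b E ∧ (∀ v : Fin n, ∃! r, r ∈ R ∧ reaches E r v) ∧
    (∀ r ∈ R, (b - 1) * compEdges E r + 1 = compSize E r)

/-!
A set `R` from which every vertex is reachable meets every component, and a hyperedge with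
`b` vertices joins at most `b` components; hence `n ≤ (b - 1)·#E + #R`, and the forests of
rooted hypertrees are exactly the pairs `(E, R)` attaining this bound. Deleting a marked edge
`e` from a forest with `s + 1` edges therefore leaves a forest with `s` edges in which the
vertices of `e` lie in distinct trees: one of them, `v`, in the tree of the old root, the other
`b - 1` as new roots. Recording `v` and these new roots makes this a bijection, so with
`r = n - (b - 1)s` roots, `(s + 1)·F(s + 1) = F(s)·n·C(r - 1, b - 1)`, which telescopes to the
closed formula.
-/

namespace Hyperforest

open Finset

variable {n b : ℕ} {E : Finset (Finset (Fin n))} {f R : Finset (Fin n)} {a r x y z : Fin n}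

lemma link_symm (h : link E x y) : link E y x :=
  let ⟨e, he, hx, hy⟩ := h; ⟨e, he, hy, hx⟩

instance : Std.Symm (link E) := ⟨fun _ _ => link_symm⟩

lemma reaches_symm (h : reaches E x y) : reaches E y x :=
  Std.Symm.symm (r := Relation.ReflTransGen (link E)) _ _ h

lemma reaches_mono {E' : Finset (Finset (Fin n))} (hE : E ⊆ E') (h : reaches E x y) :
    reaches E' x y :=
  Relation.ReflTransGen.mono (fun _ _ ⟨e, he, hx, hy⟩ => ⟨e, hE he, hx, hy⟩) _ _ h

lemma reaches_insert (h : reaches (insert f E) x y) :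
    reaches E x y ∨ ∃ w ∈ f, reaches E w y := by
  induction h with
  | refl => exact .inl .refl
  | @tail c d _ hcd ih =>
    obtain ⟨g, hg, hc, hd⟩ := hcd
    rcases mem_insert.1 hg with rfl | hgE
    · exact .inr ⟨d, hd, .refl⟩
    · have hcd : link E c d := ⟨g, hgE, hc, hd⟩
      rcases ih with h | ⟨w, hw, h⟩
      · exact .inl (h.tail hcd)
      · exact .inr ⟨w, hw, h.tail hcd⟩

lemma reaches_empty (h : reaches (∅ : Finset (Finset (Fin n))) x y) : x = y := by
  induction h with
  | refl => rfl
  | tail _ hl _ => obtain ⟨g, hg, _⟩ := hl; simp at hg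

def Covers (E : Finset (Finset (Fin n))) (R : Finset (Fin n)) : Prop :=
  ∀ v, ∃ r ∈ R, reaches E r v

def IsRootSet (E : Finset (Finset (Fin n))) (R : Finset (Fin n)) : Prop :=
  ∀ v, ∃! r, r ∈ R ∧ reaches E r v

lemma exists_reaches_of_covers_insert (hR : Covers (insert f E) R) (hf : f.Nonempty) :
    ∃ a ∈ f, ∃ r ∈ R, reaches E r a := by
  obtain ⟨z, hz⟩ := hf
  obtain ⟨r, hr, hrz⟩ := hR z
  rcases reaches_insert (reaches_symm hrz) with h | ⟨a, ha, h⟩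
  · exact ⟨z, hz, r, hr, reaches_symm h⟩
  · exact ⟨a, ha, r, hr, reaches_symm h⟩

lemma covers_union_erase (hR : Covers (insert f E) R) (hr : r ∈ R)
    (hra : reaches E r a) : Covers E (R ∪ f.erase a) := fun v => by
  obtain ⟨ρ, hρ, hρv⟩ := hR v
  rcases reaches_insert hρv with hρv | ⟨w, hw, hwv⟩
  · exact ⟨ρ, mem_union_left _ hρ, hρv⟩
  · by_cases hwa : w = a
    · exact ⟨r, mem_union_left _ hr, hra.trans (hwa ▸ hwv)⟩
    · exact ⟨w, mem_union_right _ (mem_erase.2 ⟨hwa, hw⟩), hwv⟩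

lemma exists_covers_of_covers_insert (hR : Covers (insert f E) R) :
    ∃ T, Covers E T ∧ T.card ≤ R.card + (f.card - 1) := by
  rcases f.eq_empty_or_nonempty with rfl | hf
  · refine ⟨R, fun v => ?_, by omega⟩
    obtain ⟨r, hr, hrv⟩ := hR v
    rcases reaches_insert hrv with hrv | ⟨w, hw, _⟩
    · exact ⟨r, hr, hrv⟩
    · simp at hw
  obtain ⟨a, ha, r, hr, hra⟩ := exists_reaches_of_covers_insert hR hf
  refine ⟨R ∪ f.erase a, covers_union_erase hR hr hra, ?_⟩
  calc (R ∪ f.erase a).card ≤ R.card + (f.erase a).card := card_union_le _ _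
    _ = R.card + (f.card - 1) := by rw [card_erase_of_mem ha]

theorem card_le_of_covers (hR : Covers E R) : n ≤ ∑ e ∈ E, (e.card - 1) + R.card := by
  induction E using Finset.induction_on generalizing R with
  | empty =>
    have hsub : univ ⊆ R := fun v _ => by
      obtain ⟨r, hr, hrv⟩ := hR v
      exact reaches_empty hrv ▸ hr
    simpa using card_le_card hsub
  | insert f E hf ih =>
    obtain ⟨T, hT, hTcard⟩ := exists_covers_of_covers_insert hR
    rw [sum_insert hf]
    have := ih hT
    omega

/-- If two vertices of `R` were connected, dropping one of them would leave a cover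
violating `card_le_of_covers`. -/
lemma isRootSet_of_covers (hR : Covers E R) (htight : ∑ e ∈ E, (e.card - 1) + R.card ≤ n) :
    IsRootSet E R := by
  intro v
  obtain ⟨r, hr, hrv⟩ := hR v
  refine ⟨r, ⟨hr, hrv⟩, fun r' ⟨hr', hr'v⟩ => ?_⟩
  by_contra hne
  have hcov : Covers E (R.erase r) := fun x => by
    obtain ⟨ρ, hρ, hρx⟩ := hR x
    by_cases hρr : ρ = r
    · exact ⟨r', mem_erase.2 ⟨hne, hr'⟩,
        (hr'v.trans (reaches_symm hrv)).trans (hρr ▸ hρx)⟩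
    · exact ⟨ρ, mem_erase.2 ⟨hρr, hρ⟩, hρx⟩
  have := card_le_of_covers hcov
  rw [card_erase_of_mem hr] at this
  have := card_pos.2 ⟨r, hr⟩
  omega

lemma nonempty_of_uniform (hU : Uniform b E) (hb : 1 ≤ b) : ∀ e ∈ E, e.Nonempty :=
  fun e he => card_pos.1 (by rw [hU e he]; omega)

lemma sum_card_sub_one_of_uniform (hU : Uniform b E) :
    ∑ e ∈ E, (e.card - 1) = (b - 1) * E.card := by
  rw [sum_congr rfl fun e he => by rw [hU e he], sum_const, smul_eq_mul, mul_comm]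

section Components

variable {D g : Finset (Fin n)} {v w : Fin n}

open Classical in
noncomputable def comp (E : Finset (Finset (Fin n))) (v : Fin n) : Finset (Fin n) :=
  univ.filter (reaches E v)

def edgesIn (E : Finset (Finset (Fin n))) (D : Finset (Fin n)) : Finset (Finset (Fin n)) :=
  E.filter (· ⊆ D)

@[simp] lemma mem_comp : w ∈ comp E v ↔ reaches E v w := by simp [comp]

@[simp] lemma mem_edgesIn : g ∈ edgesIn E D ↔ g ∈ E ∧ g ⊆ D := by simp [edgesIn]

lemma compSize_eq : compSize E v = (comp E v).card := by
  rw [compSize, ← Set.ncard_coe_finset]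
  congr 1
  ext
  simp

lemma compEdges_eq : compEdges E v = (edgesIn E (comp E v)).card := by
  rw [compEdges, ← Set.ncard_coe_finset]
  congr 1
  ext g
  simp [subset_iff]

lemma subset_comp (hg : g ∈ E) (hz : z ∈ g) (h : reaches E v z) : g ⊆ comp E v :=
  fun _ hx => mem_comp.2 (h.tail ⟨g, hg, hz, hx⟩)

lemma reaches_edgesIn_comp (h : reaches E v w) : reaches (edgesIn E (comp E v)) v w := by
  induction h with
  | refl => exact .refl
  | tail hvc hcd ih =>
    obtain ⟨g, hg, hc, hd⟩ := hcd
    exact ih.tail ⟨g, mem_edgesIn.2 ⟨hg, subset_comp hg hc hvc⟩, hc, hd⟩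

/-- `card_le_of_covers` for the edges inside the component, covered by `v` together with
all vertices outside the component. -/
lemma card_comp_le : (comp E v).card ≤ ∑ e ∈ edgesIn E (comp E v), (e.card - 1) + 1 := by
  have hcov : Covers (edgesIn E (comp E v)) (insert v (comp E v)ᶜ) := fun w => by
    by_cases hw : w ∈ comp E v
    · exact ⟨v, mem_insert_self _ _, reaches_edgesIn_comp (mem_comp.1 hw)⟩
    · exact ⟨w, mem_insert_of_mem (mem_compl.2 hw), .refl⟩
  have hbound := card_le_of_covers hcov
  have hins := card_insert_le v (comp E v)ᶜ
  have hcompl := card_compl (comp E v)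
  have hle := card_le_univ (comp E v)
  simp only [Fintype.card_fin] at hcompl hle
  omega

lemma disjoint_comp (hR : IsRootSet E R) {r r' : Fin n} (hr : r ∈ R) (hr' : r' ∈ R)
    (hne : r ≠ r') : Disjoint (comp E r) (comp E r') :=
  disjoint_left.2 fun w hw hw' =>
    hne ((hR w).unique ⟨hr, mem_comp.1 hw⟩ ⟨hr', mem_comp.1 hw'⟩)

lemma sum_card_comp (hR : IsRootSet E R) : ∑ r ∈ R, (comp E r).card = n := by
  rw [← card_biUnion fun r hr r' hr' hne => disjoint_comp hR hr hr' hne]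
  convert card_fin n
  refine eq_univ_of_forall fun v => ?_
  obtain ⟨r, ⟨hr, hrv⟩, _⟩ := hR v
  exact mem_biUnion.2 ⟨r, hr, mem_comp.2 hrv⟩

lemma sum_card_edgesIn_comp (hR : IsRootSet E R) (hE : ∀ e ∈ E, e.Nonempty) :
    ∑ r ∈ R, (edgesIn E (comp E r)).card = E.card := by
  rw [← card_biUnion fun r hr r' hr' hne => disjoint_left.2 fun g hg hg' => by
    obtain ⟨z, hz⟩ := hE g (mem_edgesIn.1 hg).1
    exact disjoint_left.1 (disjoint_comp hR hr hr' hne)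
      ((mem_edgesIn.1 hg).2 hz) ((mem_edgesIn.1 hg').2 hz)]
  congr 1
  ext g
  simp only [mem_biUnion, mem_edgesIn]
  refine ⟨fun ⟨_, _, hg, _⟩ => hg, fun hg => ?_⟩
  obtain ⟨z, hz⟩ := hE g hg
  obtain ⟨r, ⟨hr, hrz⟩, _⟩ := hR z
  exact ⟨r, hr, hg, subset_comp hg hz hrz⟩

end Components

/-- The excess conditions of the trees add up to the global count; conversely, a tight
global count forces every bound `card_comp_le` to be tight. -/
theorem isForestRHT_iff (hb : 1 ≤ b) :
    IsForestRHT b E R ↔ Uniform b E ∧ Covers E R ∧ n = (b - 1) * E.card + R.card := by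
  have sum_excess (hU : Uniform b E) (hR : IsRootSet E R) :
      ∑ r ∈ R, ((b - 1) * (edgesIn E (comp E r)).card + 1) = (b - 1) * E.card + R.card := by
    rw [sum_add_distrib, ← mul_sum,
      sum_card_edgesIn_comp hR (nonempty_of_uniform hU hb), sum_const, smul_eq_mul,
      mul_one]
  constructor
  · rintro ⟨hU, hR, hexc⟩
    refine ⟨hU, fun v => (hR v).exists, ?_⟩
    calc n = ∑ r ∈ R, (comp E r).card := (sum_card_comp hR).symm
      _ = ∑ r ∈ R, ((b - 1) * (edgesIn E (comp E r)).card + 1) :=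
        sum_congr rfl fun r hr => by rw [← compEdges_eq, ← compSize_eq, hexc r hr]
      _ = (b - 1) * E.card + R.card := sum_excess hU hR
  · rintro ⟨hU, hcov, hn⟩
    have hR : IsRootSet E R :=
      isRootSet_of_covers hcov (by rw [sum_card_sub_one_of_uniform hU]; omega)
    have hle : ∀ r ∈ R, (comp E r).card ≤ (b - 1) * (edgesIn E (comp E r)).card + 1 :=
      fun r _ => by
        have := card_comp_le (E := E) (v := r)
        rwa [sum_card_sub_one_of_uniform fun e he => hU e (mem_edgesIn.1 he).1] at this
    have hsum := (sum_eq_sum_iff_of_le hle).1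
      ((sum_card_comp hR).trans (hn.trans (sum_excess hU hR).symm))
    exact ⟨hU, hR, fun r hr => by rw [compEdges_eq, compSize_eq, hsum r hr]⟩

section Operations

variable {T S e : Finset (Fin n)} {v : Fin n}

open Classical in
noncomputable def rootOf (E : Finset (Finset (Fin n))) (R : Finset (Fin n)) (v : Fin n) :
    Fin n :=
  if h : ∃ r ∈ R, reaches E r v then h.choose else v

lemma rootOf_spec (hF : IsForestRHT b E R) (v : Fin n) :
    rootOf E R v ∈ R ∧ reaches E (rootOf E R v) v := by
  have h : ∃ r ∈ R, reaches E r v := (hF.2.1 v).exists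
  rw [rootOf, dif_pos h]
  exact h.choose_spec

lemma rootOf_eq (hF : IsForestRHT b E R) (hr : r ∈ R) (h : reaches E r v) : rootOf E R v = r :=
  (hF.2.1 v).unique (rootOf_spec hF v) ⟨hr, h⟩

theorem isForestRHT_insert (hb : 2 ≤ b) (hF : IsForestRHT b E T)
    (hS : S ⊆ T.erase (rootOf E T v)) (hSc : S.card = b - 1) :
    v ∉ S ∧ insert v S ∉ E ∧ IsForestRHT b (insert (insert v S) E) (T \ S) := by
  obtain ⟨hU, hcov, hn⟩ := (isForestRHT_iff (by omega)).1 hF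
  obtain ⟨hρT, hρv⟩ := rootOf_spec hF v
  set ρ := rootOf E T v
  have hST : S ⊆ T := hS.trans (erase_subset _ _)
  have hρS : ρ ∉ S := fun h => (mem_erase.1 (hS h)).1 rfl
  have hvS : v ∉ S := fun h => hρS (by rwa [show ρ = v from rootOf_eq hF (hST h) .refl])
  have heE : insert v S ∉ E := fun he => by
    obtain ⟨w, hw⟩ := card_pos.1 (show 0 < S.card by omega)
    have hρw : reaches E ρ w :=
      hρv.tail ⟨_, he, mem_insert_self _ _, mem_insert_of_mem hw⟩
    exact hρS ((rootOf_eq hF (hST hw) .refl).symm.trans (rootOf_eq hF hρT hρw) ▸ hw)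
  have hmono : ∀ {x y}, reaches E x y → reaches (insert (insert v S) E) x y :=
    reaches_mono (subset_insert _ _)
  refine ⟨hvS, heE, (isForestRHT_iff (by omega)).2 ⟨fun g hg => ?_, fun x => ?_, ?_⟩⟩
  · rcases mem_insert.1 hg with rfl | hg
    · rw [card_insert_of_notMem hvS]
      omega
    · exact hU g hg
  · obtain ⟨r, hr, hrx⟩ := hcov x
    by_cases hrS : r ∈ S
    · have hvr : link (insert (insert v S) E) v r :=
        ⟨_, mem_insert_self _ _, mem_insert_self _ _, mem_insert_of_mem hrS⟩
      exact ⟨ρ, mem_sdiff.2 ⟨hρT, hρS⟩, ((hmono hρv).tail hvr).trans (hmono hrx)⟩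
    · exact ⟨r, mem_sdiff.2 ⟨hr, hrS⟩, hmono hrx⟩
  · have := card_le_card hST
    rw [card_insert_of_notMem heE, card_sdiff_of_subset hST, mul_add_one]
    omega

lemma eq_of_reaches_of_mem_insert (hF : IsForestRHT b E T) (hS : S ⊆ T.erase (rootOf E T v))
    {w ρ : Fin n} (hw : w ∈ insert v S) (hρ : ρ ∈ T \ S) (h : reaches E ρ w) : w = v := by
  rcases mem_insert.1 hw with hwv | hwS
  · exact hwv
  · obtain ⟨hρT, hρS⟩ := mem_sdiff.1 hρ
    have hwT := (mem_erase.1 (hS hwS)).2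
    exact absurd ((hF.2.1 w).unique ⟨hρT, h⟩ ⟨hwT, .refl⟩ ▸ hwS) hρS

/-- `R ∪ e.erase v` covers `E.erase e` and is as small as `card_le_of_covers` allows, so it
is the root set of a forest. -/
theorem exists_isForestRHT_erase (hb : 1 ≤ b) (hF : IsForestRHT b E R) (he : e ∈ E) :
    ∃ v ∈ e, ∃ r ∈ R, reaches (E.erase e) r v ∧ Disjoint R (e.erase v) ∧
      IsForestRHT b (E.erase e) (R ∪ e.erase v) := by
  obtain ⟨hU, hcov, hn⟩ := (isForestRHT_iff hb).1 hF
  rw [← insert_erase he] at hcov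
  obtain ⟨v, hv, r, hr, hrv⟩ :=
    exists_reaches_of_covers_insert hcov (nonempty_of_uniform hU hb e he)
  have hcov' := covers_union_erase hcov hr hrv
  have hU' : Uniform b (E.erase e) := fun g hg => hU g (mem_of_mem_erase hg)
  have hbound := card_le_of_covers hcov'
  have hunion := card_union_le R (e.erase v)
  rw [sum_card_sub_one_of_uniform hU', card_erase_of_mem he] at hbound
  rw [card_erase_of_mem hv, hU e he] at hunion
  obtain ⟨m, hm⟩ : ∃ m, E.card = m + 1 :=
    ⟨E.card - 1, by have := card_pos.2 ⟨e, he⟩; omega⟩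
  rw [hm, mul_add_one] at hn
  rw [hm, Nat.add_sub_cancel] at hbound
  refine ⟨v, hv, r, hr, hrv, ?_, (isForestRHT_iff hb).2 ⟨hU', hcov', ?_⟩⟩
  · rw [← card_union_eq_card_add_card, card_erase_of_mem hv, hU e he]
    omega
  · rw [card_erase_of_mem he, hm, Nat.add_sub_cancel]
    omega

end Operations

section Counting

variable {s : ℕ}

open Classical in
noncomputable def forests (b n s : ℕ) : Finset (Finset (Finset (Fin n)) × Finset (Fin n)) :=
  univ.filter fun p => IsForestRHT b p.1 p.2 ∧ p.1.card = s

lemma mem_forests {p : Finset (Finset (Fin n)) × Finset (Fin n)} :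
    p ∈ forests b n s ↔ IsForestRHT b p.1 p.2 ∧ p.1.card = s := by
  simp [forests]

noncomputable def extensions (b : ℕ) (p : Finset (Finset (Fin n)) × Finset (Fin n)) :
    Finset (Σ _ : Fin n, Finset (Fin n)) :=
  univ.sigma fun v => (p.2.erase (rootOf p.1 p.2 v)).powersetCard (b - 1)

def graft (q : Σ _ : Finset (Finset (Fin n)) × Finset (Fin n), Σ _ : Fin n, Finset (Fin n)) :
    Σ _ : Finset (Finset (Fin n)) × Finset (Fin n), Finset (Fin n) :=
  ⟨(insert (insert q.2.1 q.2.2) q.1.1, q.1.2 \ q.2.2), insert q.2.1 q.2.2⟩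

lemma mem_sigma_extensions {E : Finset (Finset (Fin n))} {T S : Finset (Fin n)} {v : Fin n} :
    ⟨(E, T), v, S⟩ ∈ (forests b n s).sigma (extensions b) ↔
      (IsForestRHT b E T ∧ E.card = s) ∧ S ⊆ T.erase (rootOf E T v) ∧ S.card = b - 1 := by
  simp [mem_forests, extensions, mem_powersetCard]

lemma card_extensions (hb : 1 ≤ b) {p : Finset (Finset (Fin n)) × Finset (Fin n)}
    (hp : p ∈ forests b n s) :
    (extensions b p).card = n * (n - (b - 1) * s - 1).choose (b - 1) := by
  obtain ⟨hF, hs⟩ := mem_forests.1 hp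
  have hn := ((isForestRHT_iff hb).1 hF).2.2
  rw [extensions, card_sigma, sum_congr rfl fun v _ => by
    rw [card_powersetCard, card_erase_of_mem (rootOf_spec hF v).1],
    sum_const, card_univ, Fintype.card_fin, smul_eq_mul, ← hs]
  congr 2
  omega

lemma graft_mapsTo (hb : 2 ≤ b) :
    Set.MapsTo (@graft n) ((forests b n s).sigma (extensions b) : Set _)
      ((forests b n (s + 1)).sigma Prod.fst : Set _) := by
  rintro ⟨⟨E, T⟩, v, S⟩ hq
  obtain ⟨⟨hF, hs⟩, hS, hSc⟩ := mem_sigma_extensions.1 hq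
  obtain ⟨-, heE, hF'⟩ := isForestRHT_insert hb hF hS hSc
  refine mem_sigma.2 ⟨mem_forests.2 ⟨hF', ?_⟩, mem_insert_self _ _⟩
  show (insert (insert v S) E).card = s + 1
  rw [card_insert_of_notMem heE, hs]

lemma graft_injOn (hb : 2 ≤ b) :
    Set.InjOn (@graft n) ((forests b n s).sigma (extensions b) : Set _) := by
  rintro ⟨⟨E₁, T₁⟩, v₁, S₁⟩ hq₁ ⟨⟨E₂, T₂⟩, v₂, S₂⟩ hq₂ heq
  obtain ⟨⟨hF₁, -⟩, hS₁, hSc₁⟩ := mem_sigma_extensions.1 hq₁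
  obtain ⟨⟨hF₂, -⟩, hS₂, hSc₂⟩ := mem_sigma_extensions.1 hq₂
  obtain ⟨hvS₁, heE₁, -⟩ := isForestRHT_insert hb hF₁ hS₁ hSc₁
  obtain ⟨hvS₂, heE₂, -⟩ := isForestRHT_insert hb hF₂ hS₂ hSc₂
  simp only [graft, Sigma.mk.inj_iff, Prod.mk.injEq, heq_eq_eq] at heq
  obtain ⟨⟨hEe, hTS⟩, he⟩ := heq
  have hE : E₁ = E₂ := by
    rw [← erase_insert heE₁, ← erase_insert heE₂, hEe, he]
  obtain ⟨hρT, hρv⟩ := rootOf_spec hF₁ v₁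
  have hρS : rootOf E₁ T₁ v₁ ∉ S₁ := fun h => (mem_erase.1 (hS₁ h)).1 rfl
  have hv : v₁ = v₂ := eq_of_reaches_of_mem_insert hF₂ hS₂ (he ▸ mem_insert_self _ _)
    (hTS ▸ mem_sdiff.2 ⟨hρT, hρS⟩) (hE ▸ hρv)
  have hS : S₁ = S₂ := by
    rw [← erase_insert hvS₁, ← erase_insert hvS₂, he, hv]
  have hT : T₁ = T₂ := by
    rw [← sdiff_union_of_subset (hS₁.trans (erase_subset _ _)),
      ← sdiff_union_of_subset (hS₂.trans (erase_subset _ _)), hTS, hS]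
  subst hE hv hS hT
  rfl

lemma graft_surjOn (hb : 2 ≤ b) :
    Set.SurjOn (@graft n) ((forests b n s).sigma (extensions b) : Set _)
      ((forests b n (s + 1)).sigma Prod.fst : Set _) := by
  rintro ⟨⟨E, R⟩, e⟩ hq
  obtain ⟨hp, he⟩ := mem_sigma.1 hq
  obtain ⟨hF, hs⟩ := mem_forests.1 hp
  obtain ⟨v, hv, r, hr, hrv, hdisj, hF'⟩ := exists_isForestRHT_erase (by omega) hF he
  have hroot : rootOf (E.erase e) (R ∪ e.erase v) v = r :=
    rootOf_eq hF' (mem_union_left _ hr) hrv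
  refine ⟨⟨(E.erase e, R ∪ e.erase v), v, e.erase v⟩, mem_sigma_extensions.2
    ⟨⟨hF', by rw [card_erase_of_mem he, hs, Nat.add_sub_cancel]⟩, fun w hw => ?_,
      by rw [card_erase_of_mem hv, hF.1 e he]⟩, ?_⟩
  · refine mem_erase.2 ⟨?_, mem_union_right _ hw⟩
    rw [hroot]
    rintro rfl
    exact disjoint_left.1 hdisj hr hw
  · simp only [graft, insert_erase hv, insert_erase he,
      union_sdiff_cancel_right hdisj]

/-- Double counting forests with `s + 1` edges and a marked edge: deleting the marked edge
inverts `graft`. -/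
theorem succ_mul_card_forests_succ (hb : 2 ≤ b) :
    (s + 1) * (forests b n (s + 1)).card =
      (forests b n s).card * (n * (n - (b - 1) * s - 1).choose (b - 1)) :=
  calc (s + 1) * (forests b n (s + 1)).card
      = ((forests b n (s + 1)).sigma Prod.fst).card := by
        rw [card_sigma, sum_congr rfl fun p hp => (mem_forests.1 hp).2,
          sum_const, smul_eq_mul, mul_comm]
    _ = ((forests b n s).sigma (extensions b)).card :=
        (card_nbij graft (graft_mapsTo hb) (graft_injOn hb) (graft_surjOn hb)).symm
    _ = (forests b n s).card * (n * (n - (b - 1) * s - 1).choose (b - 1)) := by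
        rw [card_sigma, sum_congr rfl fun p hp => card_extensions (by omega) hp,
          sum_const, smul_eq_mul]

lemma forests_zero (hb : 1 ≤ b) : forests b n 0 = {(∅, univ)} := by
  ext ⟨E, R⟩
  simp only [mem_forests, isForestRHT_iff hb, card_eq_zero, mem_singleton,
    Prod.mk.injEq]
  constructor
  · rintro ⟨⟨-, hcov, -⟩, rfl⟩
    refine ⟨rfl, eq_univ_of_forall fun v => ?_⟩
    obtain ⟨r, hr, hrv⟩ := hcov v
    exact reaches_empty hrv ▸ hr
  · rintro ⟨rfl, rfl⟩
    exact ⟨⟨fun e he => absurd he (notMem_empty e),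
      fun v => ⟨v, mem_univ v, .refl⟩, by simp⟩, rfl⟩

theorem card_forests_mul (hb : 2 ≤ b) :
    ∀ s j : ℕ, n = s * (b - 1) + j + 1 →
      (forests b n s).card * (s.factorial * (b - 1).factorial ^ s * j.factorial) =
        n ^ s * (n - 1).factorial := by
  intro s
  induction s with
  | zero =>
    intro j hn
    rw [forests_zero (by omega), show n - 1 = j by omega]
    simp
  | succ s ih =>
    intro j hn
    have hn' : n = s * (b - 1) + (j + (b - 1)) + 1 := by rw [Nat.succ_mul] at hn; omega
    have hrec := succ_mul_card_forests_succ (n := n) (s := s) hb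
    rw [show n - (b - 1) * s - 1 = j + (b - 1) by rw [Nat.mul_comm (b - 1) s]; omega] at hrec
    have hchoose := Nat.add_choose_mul_factorial_mul_factorial j (b - 1)
    calc (forests b n (s + 1)).card *
          ((s + 1).factorial * (b - 1).factorial ^ (s + 1) * j.factorial)
        = ((s + 1) * (forests b n (s + 1)).card) *
            (s.factorial * (b - 1).factorial ^ s * (b - 1).factorial * j.factorial) := by
          rw [Nat.factorial_succ, pow_succ]
          ring
      _ = n * ((forests b n s).card *
            (s.factorial * (b - 1).factorial ^ s * (j + (b - 1)).factorial)) := by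
          rw [hrec, ← hchoose]
          ring
      _ = n ^ (s + 1) * (n - 1).factorial := by
          rw [ih (j + (b - 1)) hn']
          ring

theorem card_forests (hb : 2 ≤ b) {k : ℕ} (hn : n = s * (b - 1) + k + 1) :
    ((forests b n s).card : ℚ) = (n.choose (k + 1) : ℚ) * (k + 1) *
        (Nat.factorial (n - k - 1) : ℚ) / ((Nat.factorial (b - 1) : ℚ) ^ s *
          (Nat.factorial s : ℚ)) * (n : ℚ) ^ ((s : ℤ) - 1) := by
  have hcount : ((forests b n s).card : ℚ) *
      (s.factorial * (b - 1).factorial ^ s * k.factorial) = n ^ s * (n - 1).factorial := by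
    exact_mod_cast card_forests_mul hb s k hn
  have hchoose : (n.choose (k + 1) : ℚ) * (k + 1).factorial * (n - k - 1).factorial =
      n.factorial := by
    exact_mod_cast Nat.choose_mul_factorial_mul_factorial (show k + 1 ≤ n by omega)
  have hfact : (n : ℚ) * (n - 1).factorial = n.factorial := by
    exact_mod_cast Nat.mul_factorial_pred (show n ≠ 0 by omega)
  have hk : ((k + 1).factorial : ℚ) = (k + 1) * k.factorial := by
    push_cast [Nat.factorial_succ]
    ring
  have hn0 : (n : ℚ) ≠ 0 := by exact_mod_cast (show n ≠ 0 by omega)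
  rw [zpow_sub₀ hn0, zpow_one, zpow_natCast]
  field_simp
  apply mul_right_cancel₀ (show (k.factorial : ℚ) ≠ 0 by positivity)
  linear_combination (n : ℚ) * hcount - (n : ℚ) ^ s * hchoose + (n : ℚ) ^ s * hfact +
    (n : ℚ) ^ s * (n.choose (k + 1) : ℚ) * (n - k - 1).factorial * hk

end Counting

end Hyperforest

/-- The number of forests of `(k+1)` rooted `b`-uniform hypertrees with `s`
hyperedges on `n = s(b-1)+k+1` labeled vertices equals
`C(n, k+1)·(k+1)·((n-k-1)!/((b-1)!^s·s!))·n^{s-1}`. -/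
theorem forests_of_rooted_hypertrees_count (b k s n : ℕ) (hb : 2 ≤ b)
    (hn : n = s * (b - 1) + k + 1) :
    (Nat.card {p : Finset (Finset (Fin n)) × Finset (Fin n) //
        IsForestRHT b p.1 p.2 ∧ p.1.card = s ∧ p.2.card = k + 1} : ℚ)
      = (n.choose (k + 1) : ℚ) * (k + 1) *
        (Nat.factorial (n - k - 1) : ℚ) / ((Nat.factorial (b - 1) : ℚ) ^ s * (Nat.factorial s : ℚ)) * (n : ℚ) ^ ((s : ℤ) - 1) := by
  have hroots {p : Finset (Finset (Fin n)) × Finset (Fin n)}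
      (hp : p ∈ Hyperforest.forests b n s) : p.2.card = k + 1 := by
    obtain ⟨hF, hs⟩ := Hyperforest.mem_forests.1 hp
    have := ((Hyperforest.isForestRHT_iff (by omega)).1 hF).2.2
    rw [hs, mul_comm] at this
    omega
  rw [← Hyperforest.card_forests hb hn, ← Nat.card_eq_finsetCard]
  congr 1
  refine Nat.card_congr (Equiv.subtypeEquivRight fun p => ?_)
  exact ⟨fun ⟨hF, hs, _⟩ => Hyperforest.mem_forests.2 ⟨hF, hs⟩,
    fun hp => ⟨(Hyperforest.mem_forests.1 hp).1, (Hyperforest.mem_forests.1 hp).2, hroots hp⟩⟩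
end

section
/- The number of rooted b-uniform hypertrees with s hyperedges and n = s(b-1)+1 labeled vertices equals ((n-1)! / (((b-1)!)^s · s!)) · n^s. -/
/-- Connectedness: every vertex is reachable from every other. -/
def Connected {n : ℕ} (E : Finset (Finset (Fin n))) : Prop :=
  ∀ x y : Fin n, Relation.ReflTransGen (link E) x y

/-- A `b`-uniform hypertree on `Fin n`: connected of excess `-1`. -/
def IsHypertree {n : ℕ} (b : ℕ) (E : Finset (Finset (Fin n))) : Prop :=
  Uniform b E ∧ Connected E ∧ (b - 1) * E.card + 1 = n

/-!
Double counting along Pitman's coalescent. Start from the forest of `n` one-vertex rooted trees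
and perform `s` steps, each adding a hyperedge made of an arbitrary vertex `u` and the roots of
`b - 1` trees other than the tree of `u`, the merged tree keeping the root of `u`. While `k`
trees remain there are `n · C(k - 1, b - 1)` choices, so the number of step sequences is
`n ^ s · (s (b - 1))! / (b - 1)! ^ s`, and `s (b - 1) = n - 1`.

Conversely, a step sequence is determined by the rooted hypertree it builds together with the
order in which its hyperedges appear: the step adding a hyperedge `e` must take for `u` the
parent of `e`, the unique vertex of `e` joined to the root without using `e`, and for the new
non-roots the remaining vertices of `e`. Every ordering of every rooted hypertree arises this
way, so the number of step sequences is also `s!` times the number of rooted hypertrees.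
-/

open Finset
open scoped Nat

namespace Hypergraph

variable {n b s : ℕ} {E F P : Finset (Finset (Fin n))} {e e' : Finset (Fin n)}
  {ρ u v w x y : Fin n}

/-! ### Connectivity -/

def Reachable (E : Finset (Finset (Fin n))) : Fin n → Fin n → Prop :=
  Relation.ReflTransGen (link E)

namespace Reachable

theorem refl (E : Finset (Finset (Fin n))) (v : Fin n) : Reachable E v v :=
  Relation.ReflTransGen.refl

theorem trans (h : Reachable E u v) (h' : Reachable E v w) : Reachable E u w :=
  Relation.ReflTransGen.trans h h'

theorem symm (h : Reachable E v w) : Reachable E w v := by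
  induction h with
  | refl => exact refl E v
  | tail _ hl ih =>
    obtain ⟨f, hf, h₁, h₂⟩ := hl
    exact Relation.ReflTransGen.head ⟨f, hf, h₂, h₁⟩ ih

theorem mono (hEF : E ⊆ F) (h : Reachable E v w) : Reachable F v w :=
  Relation.ReflTransGen.mono (fun _ _ ⟨f, hf, h₁, h₂⟩ => ⟨f, hEF hf, h₁, h₂⟩) _ _ h

theorem of_mem (he : e ∈ E) (hv : v ∈ e) (hw : w ∈ e) : Reachable E v w :=
  Relation.ReflTransGen.single ⟨e, he, hv, hw⟩

theorem of_insert (h : Reachable (insert e F) v w) :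
    Reachable F v w ∨ ∃ x ∈ e, Reachable F v x := by
  induction h with
  | refl => exact .inl (refl F v)
  | tail _ hl ih =>
    obtain ⟨f, hf, h₁, h₂⟩ := hl
    rcases ih with ih | ih
    · rcases mem_insert.1 hf with rfl | hf
      · exact .inr ⟨_, h₁, ih⟩
      · exact .inl (ih.trans (of_mem hf h₁ h₂))
    · exact .inr ih

end Reachable

theorem _root_.Connected.reachable (hE : Connected E) (v w : Fin n) : Reachable E v w :=
  hE v w

open Classical in
noncomputable def component (E : Finset (Finset (Fin n))) (v : Fin n) : Finset (Fin n) :=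
  univ.filter (Reachable E v)

noncomputable def components (E : Finset (Finset (Fin n))) : Finset (Finset (Fin n)) :=
  univ.image (component E)

noncomputable def numComponents (E : Finset (Finset (Fin n))) : ℕ :=
  #(components E)

theorem mem_component : w ∈ component E v ↔ Reachable E v w := by
  simp [component]

theorem component_eq_component : component E v = component E w ↔ Reachable E v w := by
  refine ⟨fun h => mem_component.1 (h ▸ mem_component.2 (.refl E w)), fun h => ?_⟩
  ext z
  simp only [mem_component]
  exact ⟨h.symm.trans, h.trans⟩

theorem component_mem_components (E : Finset (Finset (Fin n))) (v : Fin n) :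
    component E v ∈ components E :=
  mem_image_of_mem _ (mem_univ v)

theorem numComponents_empty : numComponents (∅ : Finset (Finset (Fin n))) = n := by
  have h : component (∅ : Finset (Finset (Fin n))) = ({·}) := by
    funext v
    ext w
    rw [mem_component, mem_singleton]
    refine ⟨fun h => ?_, fun h => h ▸ .refl _ _⟩
    induction h with
    | refl => rfl
    | tail _ hl => obtain ⟨f, hf, -⟩ := hl; simp at hf
  rw [numComponents, components, h, card_image_of_injective _ singleton_injective, card_univ,
    Fintype.card_fin]

theorem _root_.Connected.numComponents_eq_one (hE : Connected E) (hn : 0 < n) :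
    numComponents E = 1 := by
  have h : component E = fun _ => univ := by
    funext v
    ext w
    simpa [mem_component] using hE.reachable v w
  rw [numComponents, components, h, image_const ⟨⟨0, hn⟩, mem_univ _⟩, card_singleton]

theorem component_insert_of_not_reachable (h : ∀ x ∈ e, ¬ Reachable F v x) :
    component (insert e F) v = component F v := by
  ext w
  simp only [mem_component]
  refine ⟨fun hw => ?_, .mono (subset_insert e F)⟩
  rcases hw.of_insert with hw | ⟨x, hx, hvx⟩
  · exact hw
  · exact absurd hvx (h x hx)

/-- Adding a hyperedge merges the components it meets into one and leaves the others intact. -/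
theorem numComponents_add_one_le (he : e.Nonempty) :
    numComponents F + 1 ≤ numComponents (insert e F) + #(e.image (component F)) := by
  classical
  obtain ⟨x₀, hx₀⟩ := he
  set A := (components F).filter (fun c => Disjoint e c)
  have hA : insert (component (insert e F) x₀) A ⊆ components (insert e F) := by
    refine insert_subset (component_mem_components _ _) fun c hc => ?_
    obtain ⟨hc, hec⟩ := mem_filter.1 hc
    obtain ⟨v, -, rfl⟩ := mem_image.1 hc
    rw [← component_insert_of_not_reachable fun x hx hvx =>
      disjoint_left.1 hec hx (mem_component.2 hvx)]
    exact component_mem_components _ _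
  have hx₀A : component (insert e F) x₀ ∉ A := fun h =>
    disjoint_left.1 (mem_filter.1 h).2 hx₀ (mem_component.2 (.refl _ _))
  have hcover : components F ⊆ A ∪ e.image (component F) := by
    intro c hc
    by_cases hec : Disjoint e c
    · exact mem_union_left _ (mem_filter.2 ⟨hc, hec⟩)
    · obtain ⟨x, hx, hxc⟩ := not_disjoint_iff.1 hec
      obtain ⟨v, -, rfl⟩ := mem_image.1 hc
      exact mem_union_right _
        (mem_image.2 ⟨x, hx, (component_eq_component.2 (mem_component.1 hxc)).symm⟩)
  have h₁ := card_le_card hA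
  rw [card_insert_of_notMem hx₀A] at h₁
  have h₂ := (card_le_card hcover).trans (card_union_le _ _)
  rw [numComponents, numComponents]
  omega

theorem le_numComponents_add (hb : 0 < b) (hF : Uniform b F) :
    n ≤ numComponents F + (b - 1) * #F := by
  induction F using Finset.induction_on with
  | empty => simp [numComponents_empty]
  | @insert e F heF ih =>
    have hcard : #e = b := hF e (mem_insert_self e F)
    have h := numComponents_add_one_le (F := F) (card_pos.1 (hcard ▸ hb))
    have := ih fun f hf => hF f (mem_insert_of_mem hf)
    have := (card_image_le (s := e) (f := component F)).trans hcard.le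
    rw [card_insert_of_notMem heF, Nat.mul_succ]
    omega

/-! ### Parents and children in a rooted hypertree -/

theorem _root_.Connected.exists_mem_reachable_erase (hE : Connected E) (he : e.Nonempty)
    (ρ : Fin n) : ∃ x ∈ e, Reachable (E.erase e) x ρ := by
  obtain ⟨y, hy⟩ := he
  rcases ((hE.reachable ρ y).mono (insert_erase_subset e E)).of_insert with h | ⟨x, hx, h⟩
  · exact ⟨y, hy, h.symm⟩
  · exact ⟨x, hx, h.symm⟩

/-- Counting hyperedges, `E.erase e` has at least `b` components; if two vertices of `e` were
joined in it, adding `e` back would merge fewer than `b` of them and leave `E` disconnected. -/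
theorem _root_.IsHypertree.not_reachable_erase (hE : IsHypertree b E) (he : e ∈ E)
    (hx : x ∈ e) (hy : y ∈ e) (hxy : x ≠ y) : ¬ Reachable (E.erase e) x y := by
  intro hxy'
  obtain ⟨hU, hC, hcount⟩ := hE
  have hb : 2 ≤ b := hU e he ▸ one_lt_card.2 ⟨x, hx, y, hy, hxy⟩
  have himage : e.image (component (E.erase e)) ⊆ (e.erase y).image (component (E.erase e)) := by
    intro c hc
    obtain ⟨z, hz, rfl⟩ := mem_image.1 hc
    by_cases hzy : z = y
    · exact mem_image.2 ⟨x, mem_erase.2 ⟨hxy, hx⟩, hzy ▸ component_eq_component.2 hxy'⟩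
    · exact mem_image_of_mem _ (mem_erase.2 ⟨hzy, hz⟩)
  have hmerge := numComponents_add_one_le (F := E.erase e) ⟨x, hx⟩
  rw [insert_erase he, hC.numComponents_eq_one (by omega)] at hmerge
  have hsmall := (card_le_card himage).trans card_image_le
  rw [card_erase_of_mem hy, hU e he] at hsmall
  have hlarge := le_numComponents_add (F := E.erase e) (by omega) fun f hf =>
    hU f (mem_of_mem_erase hf)
  rw [card_erase_of_mem he, Nat.mul_sub_one] at hlarge
  have : b - 1 ≤ (b - 1) * #E := Nat.le_mul_of_pos_right _ (card_pos.2 ⟨e, he⟩)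
  omega

open Classical in
noncomputable def parent (E : Finset (Finset (Fin n))) (ρ : Fin n) (e : Finset (Fin n)) :
    Fin n :=
  if h : ∃ x ∈ e, Reachable (E.erase e) x ρ then h.choose else ρ

noncomputable def children (E : Finset (Finset (Fin n))) (ρ : Fin n) (e : Finset (Fin n)) :
    Finset (Fin n) :=
  e.erase (parent E ρ e)

theorem parent_spec (hE : Connected E) (he : e.Nonempty) :
    parent E ρ e ∈ e ∧ Reachable (E.erase e) (parent E ρ e) ρ := by
  have h := hE.exists_mem_reachable_erase he ρ
  rw [parent, dif_pos h]
  exact h.choose_spec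

theorem _root_.IsHypertree.nonempty_of_mem (hE : IsHypertree b E) (hb : 0 < b) (he : e ∈ E) :
    e.Nonempty :=
  card_pos.1 (hE.1 e he ▸ hb)

theorem _root_.IsHypertree.eq_parent (hE : IsHypertree b E) (he : e ∈ E) (hx : x ∈ e)
    (h : Reachable (E.erase e) x ρ) : x = parent E ρ e := by
  obtain ⟨hp, hpρ⟩ := parent_spec hE.2.1 ⟨x, hx⟩ (ρ := ρ)
  by_contra hne
  exact hE.not_reachable_erase he hx hp hne (h.trans hpρ.symm)

theorem _root_.IsHypertree.mem_children (hE : IsHypertree b E) (he : e ∈ E) :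
    v ∈ children E ρ e ↔ v ∈ e ∧ ¬ Reachable (E.erase e) v ρ := by
  rw [children, mem_erase]
  constructor
  · rintro ⟨hne, hv⟩
    exact ⟨hv, fun h => hne (hE.eq_parent he hv h)⟩
  · rintro ⟨hv, hvρ⟩
    exact ⟨fun h => hvρ (h ▸ (parent_spec hE.2.1 ⟨v, hv⟩).2), hv⟩

theorem _root_.IsHypertree.card_children (hE : IsHypertree b E) (hb : 0 < b) (he : e ∈ E) :
    #(children E ρ e) = b - 1 := by
  rw [children, card_erase_of_mem (parent_spec hE.2.1 (hE.nonempty_of_mem hb he)).1, hE.1 e he]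

/-- If `v` were a child in both `e` and `e'`, the walk from `ρ` to the parent of `e` avoiding
`e` either avoids `e'` too or meets it; either way `v` reaches `ρ` avoiding `e` or `e'`. -/
theorem _root_.IsHypertree.disjoint_children (hE : IsHypertree b E) (he : e ∈ E) (he' : e' ∈ E)
    (hne : e ≠ e') : Disjoint (children E ρ e) (children E ρ e') := by
  rw [disjoint_left]
  intro v hv hv'
  rw [hE.mem_children he] at hv
  rw [hE.mem_children he'] at hv'
  have he'e : e' ∈ E.erase e := mem_erase.2 ⟨hne.symm, he'⟩
  have hee' : e ∈ E.erase e' := mem_erase.2 ⟨hne, he⟩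
  obtain ⟨hp, hpρ⟩ := parent_spec hE.2.1 ⟨v, hv.1⟩ (ρ := ρ)
  rw [← insert_erase he'e] at hpρ
  rcases hpρ.symm.of_insert with h | ⟨x, hx, h⟩
  · refine hv'.2 ((Reachable.of_mem hee' hv.1 hp).trans (h.symm.mono ?_))
    rw [erase_right_comm]
    exact erase_subset _ _
  · exact hv.2 ((Reachable.of_mem he'e hv'.1 hx).trans (h.symm.mono (erase_subset _ _)))

theorem _root_.IsHypertree.biUnion_children (hE : IsHypertree b E) (hb : 0 < b) :
    E.biUnion (children E ρ) = univ.erase ρ := by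
  refine eq_of_subset_of_card_le (fun v hv => ?_) ?_
  · obtain ⟨e, he, hve⟩ := mem_biUnion.1 hv
    refine mem_erase.2 ⟨?_, mem_univ v⟩
    rintro rfl
    exact ((hE.mem_children he).1 hve).2 (.refl _ _)
  · rw [card_biUnion fun e he e' he' hne => hE.disjoint_children he he' hne,
      sum_congr rfl fun e he => hE.card_children hb he, sum_const, smul_eq_mul,
      card_erase_of_mem (mem_univ ρ), card_univ, Fintype.card_fin, Nat.mul_comm]
    have := hE.2.2
    omega

/-! ### Growing a hypertree by steps -/

/-- A step `(u, B)` adds the hyperedge `insert u B` to a rooted forest, where `B` consists of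
`b - 1` roots of trees other than the tree of `u`; the merged tree keeps the root of `u`.
A rooted forest on `Fin n` is recorded by its root map, sending each vertex to its root. -/
abbrev Step (n : ℕ) := Fin n × Finset (Fin n)

variable {k : ℕ} {r : Fin n → Fin n} {p q : Step n} {L M : List (Step n)}

def Step.edge (p : Step n) : Finset (Fin n) := insert p.1 p.2

def merge (r : Fin n → Fin n) (p : Step n) (v : Fin n) : Fin n :=
  if r v ∈ p.2 then r p.1 else r v

def roots (r : Fin n → Fin n) : Finset (Fin n) := univ.filter fun v => r v = v

def IsRootMap (r : Fin n → Fin n) : Prop := ∀ v, r (r v) = r v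

def Admissible (b : ℕ) (r : Fin n → Fin n) (p : Step n) : Prop :=
  #p.2 = b - 1 ∧ p.2 ⊆ roots r ∧ r p.1 ∉ p.2

instance : DecidablePred (Admissible b r) := fun _ => inferInstanceAs (Decidable (_ ∧ _ ∧ _))

def admissibleSteps (b : ℕ) (r : Fin n → Fin n) : Finset (Step n) :=
  univ.filter (Admissible b r)

def Valid (b : ℕ) : (Fin n → Fin n) → List (Step n) → Prop
  | _, [] => True
  | r, p :: L => Admissible b r p ∧ Valid b (merge r p) L

def sequences (b : ℕ) : ℕ → (Fin n → Fin n) → Finset (List (Step n))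
  | 0, _ => {[]}
  | l + 1, r => (admissibleSteps b r).biUnion fun p => (sequences b l (merge r p)).image (p :: ·)

def run (r : Fin n → Fin n) (L : List (Step n)) : Fin n → Fin n := L.foldl merge r

theorem mem_roots : v ∈ roots r ↔ r v = v := by simp [roots]

theorem roots_id : roots (id : Fin n → Fin n) = univ := by ext; simp [roots]

theorem isRootMap_id : IsRootMap (id : Fin n → Fin n) := fun _ => rfl

theorem merge_congr (h : r v = r w) : merge r p v = merge r p w := by simp only [merge, h]

namespace Admissible

variable (hp : Admissible b r p)
include hp

theorem fst_notMem : p.1 ∉ p.2 := fun h => hp.2.2 (by rwa [mem_roots.1 (hp.2.1 h)])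

theorem card_edge (hb : 0 < b) : #p.edge = b := by
  rw [Step.edge, card_insert_of_notMem hp.fst_notMem, hp.1]
  omega

theorem merge_of_mem_edge (hv : v ∈ p.edge) : merge r p v = r p.1 := by
  rcases mem_insert.1 hv with rfl | hv
  · simp [merge, hp.2.2]
  · simp [merge, mem_roots.1 (hp.2.1 hv), hv]

variable (hr : IsRootMap r)
include hr

theorem isRootMap_merge : IsRootMap (merge r p) := by
  intro v
  by_cases hv : r v ∈ p.2 <;> simp [merge, hv, hr _, hp.2.2]

theorem roots_merge : roots (merge r p) = roots r \ p.2 := by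
  ext v
  simp only [mem_roots, mem_sdiff, merge]
  split_ifs with hv
  · exact ⟨fun h => absurd (hr p.1 ▸ h ▸ hv) hp.2.2, fun ⟨h, h'⟩ => absurd (h ▸ hv) h'⟩
  · exact ⟨fun h => ⟨h, h ▸ hv⟩, And.left⟩

theorem card_roots_merge : #(roots (merge r p)) = #(roots r) - (b - 1) := by
  rw [hp.roots_merge hr, card_sdiff_of_subset hp.2.1, hp.1]

end Admissible

theorem card_admissibleSteps (hr : IsRootMap r) :
    #(admissibleSteps b r) = n * (#(roots r) - 1).choose (b - 1) := by
  have hfiber (u : Fin n) :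
      univ.filter (fun B => Admissible b r (u, B))
        = powersetCard (b - 1) ((roots r).erase (r u)) := by
    ext B
    simp [Admissible, mem_powersetCard, subset_erase, and_comm]
  rw [admissibleSteps, card_filter, Fintype.sum_prod_type]
  simp only [← card_filter, hfiber, card_powersetCard,
    card_erase_of_mem (mem_roots.2 (hr _)), sum_const, card_univ, Fintype.card_fin, smul_eq_mul]

theorem valid_append : Valid b r (L ++ M) ↔ Valid b r L ∧ Valid b (run r L) M := by
  induction L generalizing r with
  | nil => simp [Valid, run]
  | cons p L ih => simp only [List.cons_append, Valid, ih, run, List.foldl_cons, and_assoc]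

theorem mem_sequences : L ∈ sequences b k r ↔ L.length = k ∧ Valid b r L := by
  induction k generalizing r L with
  | zero =>
    simp only [sequences, mem_singleton, List.length_eq_zero_iff, iff_self_and]
    rintro rfl
    trivial
  | succ k ih =>
    cases L with
    | nil => simp [sequences]
    | cons p L =>
      simp only [sequences, mem_biUnion, mem_image, admissibleSteps, mem_filter, mem_univ,
        true_and, ih, List.cons.injEq, List.length_cons, Nat.add_right_cancel_iff, Valid]
      constructor
      · rintro ⟨p, hp, L, ⟨hl, hV⟩, rfl, rfl⟩
        exact ⟨hl, hp, hV⟩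
      · rintro ⟨hl, hp, hV⟩
        exact ⟨p, hp, L, ⟨hl, hV⟩, rfl, rfl⟩

namespace Valid

theorem isRootMap_run (hV : Valid b r L) (hr : IsRootMap r) : IsRootMap (run r L) := by
  induction L generalizing r with
  | nil => exact hr
  | cons p L ih => exact ih hV.2 (hV.1.isRootMap_merge hr)

theorem card_roots_run (hV : Valid b r L) (hr : IsRootMap r) :
    #(roots (run r L)) = #(roots r) - L.length * (b - 1) := by
  induction L generalizing r with
  | nil => simp [run]
  | cons p L ih =>
    rw [run, List.foldl_cons, ← run, ih hV.2 (hV.1.isRootMap_merge hr),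
      hV.1.card_roots_merge hr, List.length_cons, Nat.succ_mul, Nat.sub_sub, Nat.add_comm]

theorem exists_admissible (hV : Valid b r L) (hq : q ∈ L) : ∃ r', Admissible b r' q := by
  induction L generalizing r with
  | nil => simp at hq
  | cons p L ih =>
    rcases List.mem_cons.1 hq with rfl | hq
    · exact ⟨r, hV.1⟩
    · exact ih hV.2 hq

end Valid

theorem card_sequences_mul (hr : IsRootMap r) (hroots : #(roots r) = k * (b - 1) + 1) :
    #(sequences b k r) * (b - 1)! ^ k = n ^ k * (k * (b - 1))! := by
  induction k generalizing r with
  | zero => simp [sequences]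
  | succ k ih =>
    have hsub : ∀ p ∈ admissibleSteps b r, #((sequences b k (merge r p)).image (p :: ·))
        * (b - 1)! ^ k = n ^ k * (k * (b - 1))! := by
      intro p hp
      have hp : Admissible b r p := (mem_filter.1 hp).2
      rw [card_image_of_injective _ List.cons_injective]
      refine ih (hp.isRootMap_merge hr) ?_
      rw [hp.card_roots_merge hr, hroots, Nat.succ_mul]
      omega
    have hdisj : (admissibleSteps b r : Set (Step n)).PairwiseDisjoint
        fun p => (sequences b k (merge r p)).image (p :: ·) := by
      intro p _ p' _ hne
      simp only [Function.onFun, disjoint_left, mem_image]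
      rintro _ ⟨L, -, rfl⟩ ⟨L', -, h⟩
      exact hne (List.cons.inj h).1.symm
    have hchoose := Nat.choose_mul_factorial_mul_factorial (n := (k + 1) * (b - 1)) (k := b - 1)
      (Nat.le_mul_of_pos_left _ k.succ_pos)
    rw [Nat.succ_mul, Nat.add_sub_cancel] at hchoose
    rw [sequences, card_biUnion hdisj, pow_succ, ← mul_assoc, sum_mul, sum_congr rfl hsub,
      sum_const, card_admissibleSteps hr, hroots, Nat.add_sub_cancel, smul_eq_mul, Nat.succ_mul,
      ← hchoose]
    ring

def edges (L : List (Step n)) : Finset (Finset (Fin n)) := (L.map Step.edge).toFinset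

theorem mem_edges_of_mem (hq : q ∈ L) : q.edge ∈ edges L :=
  List.mem_toFinset.2 (List.mem_map_of_mem hq)

theorem edges_cons : edges (p :: L) = insert p.edge (edges L) := by
  simp [edges]

theorem reachable_merge (hp : p.edge ∈ P) (hx : Reachable P x (r x))
    (hp₁ : r x ∈ p.2 → Reachable P p.1 (r p.1)) : Reachable P x (merge r p x) := by
  unfold merge
  split_ifs with h
  · exact hx.trans
      ((Reachable.of_mem hp (mem_insert_of_mem h) (mem_insert_self _ _)).trans (hp₁ h))
  · exact hx

def ReachesRootOutside (P : Finset (Finset (Fin n))) (r : Fin n → Fin n) (u : Fin n) : Prop :=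
  ∀ x, (x = u ∨ r x ≠ r u) → Reachable P x (r x)

theorem ReachesRootOutside.merge (h : ReachesRootOutside P r u) (hp : Admissible b r p) :
    ReachesRootOutside (insert p.edge P) (merge r p) u := by
  intro x hx
  have hxu : x = u ∨ r x ≠ r u :=
    hx.imp_right fun hne hru => hne (merge_congr hru)
  refine reachable_merge (mem_insert_self _ _) ((h x hxu).mono (subset_insert _ _)) fun hx₂ =>
    (h p.1 (.inr fun h₁ => ?_)).mono (subset_insert _ _)
  have hu₂ : r u ∉ p.2 := h₁ ▸ hp.2.2
  rcases hx with rfl | hne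
  · exact hu₂ hx₂
  · exact hne (by rw [Hypergraph.merge, Hypergraph.merge, if_pos hx₂, if_neg hu₂, h₁])

namespace Valid

/-- Each step joins two trees, whereas all vertices of a hyperedge used earlier lie in one. -/
theorem edge_notMem (hb : 2 ≤ b) (hV : Valid b r L) (he : ∀ x ∈ e, ∀ y ∈ e, r x = r y) :
    e ∉ L.map Step.edge := by
  induction L generalizing r with
  | nil => simp
  | cons p L ih =>
    rintro (h | ⟨_, h⟩)
    · obtain ⟨y, hy⟩ := card_pos.1 (show 0 < #p.2 by rw [hV.1.1]; omega)
      refine hV.1.2.2 ?_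
      rw [he _ (mem_insert_self _ _) y (mem_insert_of_mem hy), mem_roots.1 (hV.1.2.1 hy)]
      exact hy
    · exact ih hV.2 (fun x hx y hy => merge_congr (he x hx y hy)) h

theorem nodup_map_edge (hb : 2 ≤ b) (hV : Valid b r L) : (L.map Step.edge).Nodup := by
  induction L generalizing r with
  | nil => exact List.nodup_nil
  | cons p L ih =>
    refine List.nodup_cons.2 ⟨hV.2.edge_notMem hb fun x hx y hy => ?_, ih hV.2⟩
    rw [hV.1.merge_of_mem_edge hx, hV.1.merge_of_mem_edge hy]

theorem card_edges (hb : 2 ≤ b) (hV : Valid b r L) : #(edges L) = L.length := by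
  rw [edges, List.toFinset_card_of_nodup (hV.nodup_map_edge hb), List.length_map]

theorem reachable_run (hV : Valid b r M) (h : ReachesRootOutside P r u) :
    Reachable (P ∪ edges M) u (run r M u) := by
  induction M generalizing r P with
  | nil => exact (h u (.inl rfl)).mono subset_union_left
  | cons p M ih =>
    refine (ih hV.2 (h.merge hV.1)).mono ?_
    rw [edges_cons, insert_union, union_insert]

theorem reachable_run_id (hV : Valid b id L) (v : Fin n) : Reachable (edges L) v (run id L v) := by
  simpa using hV.reachable_run (P := ∅) fun x _ => Reachable.refl ∅ x

theorem run_id_eq (hV : Valid b id L) (hn : n = L.length * (b - 1) + 1) (v w : Fin n) :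
    run id L v = run id L w := by
  have hroots := hV.card_roots_run isRootMap_id
  rw [roots_id, card_univ, Fintype.card_fin] at hroots
  have hr := hV.isRootMap_run isRootMap_id
  exact card_le_one.1 (by omega) _ (mem_roots.2 (hr v)) _ (mem_roots.2 (hr w))

theorem isHypertree_edges (hb : 2 ≤ b) (hV : Valid b id L) (hn : n = L.length * (b - 1) + 1) :
    IsHypertree b (edges L) := by
  refine ⟨fun f hf => ?_, fun x y => ?_, ?_⟩
  · obtain ⟨q, hq, rfl⟩ := List.mem_map.1 (List.mem_toFinset.1 hf)
    obtain ⟨r', hq'⟩ := hV.exists_admissible hq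
    exact hq'.card_edge (by omega)
  · have := (hV.reachable_run_id y).symm
    rw [hV.run_id_eq hn y x] at this
    exact (hV.reachable_run_id x).trans this
  · rw [hV.card_edges hb, Nat.mul_comm]
    exact hn.symm

/-- Right after the step `q`, every vertex outside the tree of `q.1` reaches its root through
earlier hyperedges, and later steps preserve this; so `q.1` reaches the final root without
`q.edge`. -/
theorem reachable_erase_edge (hb : 2 ≤ b) (hV : Valid b id L) (hq : q ∈ L) :
    Reachable ((edges L).erase q.edge) q.1 (run id L q.1) := by
  obtain ⟨L₁, L₂, rfl⟩ := List.append_of_mem hq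
  obtain ⟨hV₁, hq', hV₂⟩ := valid_append.1 hV
  have hstart : ReachesRootOutside (edges L₁) (merge (run id L₁) q) q.1 := by
    intro x hx
    have hx₂ : run id L₁ x ∉ q.2 := by
      intro hx₂
      rcases hx with rfl | hne
      · exact hq'.2.2 hx₂
      · exact hne (by rw [merge, if_pos hx₂, hq'.merge_of_mem_edge (mem_insert_self _ _)])
    rw [merge, if_neg hx₂]
    exact hV₁.reachable_run_id x
  have hsub : edges L₁ ∪ edges L₂ ⊆ (edges (L₁ ++ q :: L₂)).erase q.edge := by
    have hnd := hV.nodup_map_edge hb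
    simp only [List.map_append, List.map_cons, List.nodup_append, List.nodup_cons] at hnd
    intro f hf
    simp only [edges, mem_union, List.mem_toFinset] at hf
    simp only [edges, mem_erase, List.mem_toFinset, List.map_append, List.map_cons,
      List.mem_append, List.mem_cons]
    grind
  have := (hV₂.reachable_run hstart).mono hsub
  rwa [run, List.foldl_append, List.foldl_cons, ← run, ← run]

end Valid

/-! ### Rooted hypertrees as step sequences -/

variable {l : List (Finset (Fin n))}

noncomputable def stepOf (E : Finset (Finset (Fin n))) (ρ : Fin n) (e : Finset (Fin n)) :
    Step n :=
  (parent E ρ e, children E ρ e)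

theorem edge_stepOf (hE : Connected E) (he : e.Nonempty) : (stepOf E ρ e).edge = e :=
  insert_erase (parent_spec hE he).1

theorem map_edge_map_stepOf (hE : Connected E) (hl : ∀ e ∈ l, e.Nonempty) :
    (l.map (stepOf E ρ)).map Step.edge = l := by
  rw [List.map_map]
  exact (List.map_congr_left fun e he => edge_stepOf hE (hl e he)).trans (List.map_id l)

theorem Valid.stepOf_edge (hb : 2 ≤ b) (hV : Valid b id L) (hn : n = L.length * (b - 1) + 1)
    (hq : q ∈ L) (v : Fin n) : stepOf (edges L) (run id L v) q.edge = q := by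
  have hpar : q.1 = parent (edges L) (run id L v) q.edge := by
    refine (hV.isHypertree_edges hb hn).eq_parent (mem_edges_of_mem hq) (mem_insert_self _ _) ?_
    rw [hV.run_id_eq hn v q.1]
    exact hV.reachable_erase_edge hb hq
  obtain ⟨r', hq'⟩ := hV.exists_admissible hq
  rw [stepOf, children, ← hpar, Step.edge, erase_insert hq'.fst_notMem]

/-- The state reached after processing, in some order, the hyperedges `P` of the rooted
hypertree `(E, ρ)` by the steps `stepOf E ρ`. -/
def IsPartialRun (E : Finset (Finset (Fin n))) (ρ : Fin n) (P : Finset (Finset (Fin n)))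
    (r : Fin n → Fin n) : Prop :=
  IsRootMap r ∧ (∀ v, Reachable P v (r v)) ∧ roots r = univ \ P.biUnion (children E ρ)

namespace IsPartialRun

variable (h : IsPartialRun E ρ P r) (hE : IsHypertree b E) (hb : 0 < b) (hPE : P ⊆ E)
include h hE hb hPE

theorem admissible_stepOf (he : e ∈ E) (heP : e ∉ P) : Admissible b r (stepOf E ρ e) := by
  refine ⟨hE.card_children hb he, fun v hv => ?_, fun hv => ?_⟩
  · rw [h.2.2, mem_sdiff]
    refine ⟨mem_univ v, fun hvP => ?_⟩
    obtain ⟨f, hf, hvf⟩ := mem_biUnion.1 hvP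
    exact disjoint_left.1 (hE.disjoint_children he (hPE hf) fun h => heP (h ▸ hf)) hv hvf
  · have hPe : P ⊆ E.erase e := fun f hf => mem_erase.2 ⟨fun h => heP (h ▸ hf), hPE hf⟩
    have hp := (parent_spec hE.2.1 (hE.nonempty_of_mem hb he) (ρ := ρ)).2
    exact ((hE.mem_children he).1 hv).2 (((h.2.1 _).mono hPe).symm.trans hp)

theorem merge_stepOf (he : e ∈ E) (heP : e ∉ P) :
    IsPartialRun E ρ (insert e P) (merge r (stepOf E ρ e)) := by
  have hp := h.admissible_stepOf hE hb hPE he heP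
  have hedge : (stepOf E ρ e).edge ∈ insert e P := by
    rw [edge_stepOf hE.2.1 (hE.nonempty_of_mem hb he)]
    exact mem_insert_self e P
  refine ⟨hp.isRootMap_merge h.1, fun v => reachable_merge hedge
    ((h.2.1 v).mono (subset_insert _ _)) fun _ => (h.2.1 _).mono (subset_insert _ _), ?_⟩
  rw [hp.roots_merge h.1, h.2.2, biUnion_insert, sdiff_sdiff_left, sup_eq_union, union_comm]
  rfl

theorem valid_map_stepOf (hl : l.Nodup) (hlE : ∀ e ∈ l, e ∈ E) (hlP : ∀ e ∈ l, e ∉ P) :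
    Valid b r (l.map (stepOf E ρ)) ∧
      IsPartialRun E ρ (P ∪ l.toFinset) (run r (l.map (stepOf E ρ))) := by
  induction l generalizing P r with
  | nil => simpa [Valid, run] using h
  | cons e l ih =>
    have he := hlE e List.mem_cons_self
    have heP := hlP e List.mem_cons_self
    obtain ⟨hV, h'⟩ := ih (h.merge_stepOf hE hb hPE he heP) (insert_subset he hPE) hl.of_cons
      (fun f hf => hlE f (List.mem_cons_of_mem _ hf)) fun f hf hfP =>
        (mem_insert.1 hfP).elim (fun hfe => (List.nodup_cons.1 hl).1 (hfe ▸ hf))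
          (hlP f (List.mem_cons_of_mem _ hf))
    refine ⟨⟨h.admissible_stepOf hE hb hPE he heP, hV⟩, ?_⟩
    rw [List.map_cons, run, List.foldl_cons, ← run, List.toFinset_cons, union_insert,
      ← insert_union]
    exact h'

end IsPartialRun

theorem _root_.IsHypertree.valid_map_stepOf (hE : IsHypertree b E) (hb : 0 < b) (hl : l.Nodup)
    (hlE : l.toFinset = E) (ρ : Fin n) :
    Valid b id (l.map (stepOf E ρ)) ∧ ∀ v, run id (l.map (stepOf E ρ)) v = ρ := by
  have hstart : IsPartialRun E ρ ∅ id := ⟨isRootMap_id, .refl ∅, by simp [roots_id]⟩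
  obtain ⟨hV, hr, -, hroots⟩ := hstart.valid_map_stepOf hE hb (empty_subset E) hl
    (fun e he => hlE ▸ List.mem_toFinset.2 he) fun _ _ => notMem_empty _
  rw [empty_union, hlE, hE.biUnion_children hb, sdiff_erase (mem_univ ρ), sdiff_self,
    bot_eq_empty, insert_empty] at hroots
  exact ⟨hV, fun v => mem_singleton.1 (hroots ▸ mem_roots.2 (hr v))⟩

/-! ### Counting -/

noncomputable def orderings {α : Type*} [DecidableEq α] (s : Finset α) : Finset (List α) :=
  s.toList.permutations.toFinset

theorem mem_orderings {α : Type*} [DecidableEq α] {s : Finset α} {l : List α} :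
    l ∈ orderings s ↔ l.Nodup ∧ l.toFinset = s := by
  rw [orderings, List.mem_toFinset, List.mem_permutations]
  refine ⟨fun h => ⟨h.nodup_iff.2 s.nodup_toList, ?_⟩, fun ⟨hl, hls⟩ => ?_⟩
  · rw [List.toFinset_eq_of_perm _ _ h, toList_toFinset]
  · exact List.perm_of_nodup_nodup_toFinset_eq hl s.nodup_toList (by rw [hls, toList_toFinset])

theorem card_orderings {α : Type*} [DecidableEq α] (s : Finset α) : #(orderings s) = (#s)! := by
  rw [orderings, List.toFinset_card_of_nodup (List.nodup_permutations _ s.nodup_toList),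
    List.length_permutations, length_toList]

open Classical in
noncomputable def rootedHypertrees (b s n : ℕ) : Finset (Finset (Finset (Fin n)) × Fin n) :=
  univ.filter fun t => IsHypertree b t.1 ∧ #t.1 = s

theorem mem_rootedHypertrees {t : Finset (Finset (Fin n)) × Fin n} :
    t ∈ rootedHypertrees b s n ↔ IsHypertree b t.1 ∧ #t.1 = s := by
  simp [rootedHypertrees]

theorem card_sequences_filter (hb : 2 ≤ b) (hn : n = s * (b - 1) + 1) (hE : IsHypertree b E)
    (hs : #E = s) (v₀ ρ : Fin n) :
    #{L ∈ sequences b s id | (edges L, run id L v₀) = (E, ρ)} = s ! := by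
  rw [← hs, ← card_orderings]
  have hne : ∀ e ∈ E, e.Nonempty := fun e he => hE.nonempty_of_mem (by omega) he
  refine card_nbij' (List.map Step.edge) (List.map (stepOf E ρ)) (fun L hL => ?_)
    (fun l hl => ?_) (fun L hL => ?_) fun l hl => ?_
  · simp only [mem_coe, mem_filter, mem_sequences, Prod.mk.injEq] at hL
    obtain ⟨⟨-, hV⟩, rfl, -⟩ := hL
    exact mem_orderings.2 ⟨hV.nodup_map_edge hb, rfl⟩
  · obtain ⟨hl, hlE⟩ := mem_orderings.1 (mem_coe.1 hl)
    obtain ⟨hV, hρ⟩ := hE.valid_map_stepOf (by omega) hl hlE ρ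
    have hlE' : ∀ e ∈ l, e.Nonempty := fun e he => hne e (hlE ▸ List.mem_toFinset.2 he)
    simp only [mem_coe, mem_filter, mem_sequences, Prod.mk.injEq, List.length_map]
    refine ⟨⟨?_, hV⟩, ?_, hρ v₀⟩
    · rw [← hlE, List.toFinset_card_of_nodup hl]
    · rw [edges, map_edge_map_stepOf hE.2.1 hlE', hlE]
  · simp only [mem_coe, mem_filter, mem_sequences, Prod.mk.injEq] at hL
    obtain ⟨⟨hlen, hV⟩, rfl, rfl⟩ := hL
    rw [List.map_map]
    refine (List.map_congr_left fun q hq => ?_).trans (List.map_id L)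
    exact hV.stepOf_edge hb (by rw [hlen, hs, hn]) hq v₀
  · obtain ⟨hl, hlE⟩ := mem_orderings.1 (mem_coe.1 hl)
    exact map_edge_map_stepOf hE.2.1 fun e he => hne e (hlE ▸ List.mem_toFinset.2 he)

theorem card_sequences_id (hb : 2 ≤ b) (hn : n = s * (b - 1) + 1) :
    #(sequences b s (id : Fin n → Fin n)) = #(rootedHypertrees b s n) * s ! := by
  let v₀ : Fin n := ⟨0, by omega⟩
  rw [card_eq_sum_card_fiberwise (f := fun L => (edges L, run id L v₀)) fun L hL => ?_]
  · refine sum_const_nat fun t ht => ?_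
    obtain ⟨hE, hs⟩ := mem_rootedHypertrees.1 ht
    exact card_sequences_filter hb hn hE hs v₀ t.2
  · obtain ⟨hlen, hV⟩ := mem_sequences.1 hL
    subst hlen
    exact mem_rootedHypertrees.2 ⟨hV.isHypertree_edges hb hn, hV.card_edges hb⟩

theorem natCard_rootedHypertrees :
    Nat.card {t : Finset (Finset (Fin n)) × Fin n // IsHypertree b t.1 ∧ #t.1 = s}
      = #(rootedHypertrees b s n) := by
  classical
  rw [Nat.card_eq_fintype_card, Fintype.card_subtype, rootedHypertrees]

theorem card_rootedHypertrees_mul (hb : 2 ≤ b) (hn : n = s * (b - 1) + 1) :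
    #(rootedHypertrees b s n) * s ! * (b - 1)! ^ s = n ^ s * (n - 1)! := by
  rw [← card_sequences_id hb hn, show n - 1 = s * (b - 1) by omega]
  exact card_sequences_mul isRootMap_id (by rw [roots_id, card_univ, Fintype.card_fin, hn])

end Hypergraph

/-- The number of rooted `b`-uniform hypertrees with `s` hyperedges on
`n = s(b-1)+1` labeled vertices equals `((n-1)!/((b-1)!^s · s!))·n^s`. -/
theorem rooted_hypertrees_count (b s n : ℕ) (hb : 2 ≤ b) (hn : n = s * (b - 1) + 1) :
    (Nat.card {p : Finset (Finset (Fin n)) × Fin n //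
        IsHypertree b p.1 ∧ p.1.card = s} : ℚ)
      = (Nat.factorial (n - 1) : ℚ) * (n : ℚ) ^ s /
        ((Nat.factorial (b - 1) : ℚ) ^ s * (Nat.factorial s : ℚ)) := by
  have h : (#(Hypergraph.rootedHypertrees b s n) : ℚ) * s ! * (b - 1)! ^ s
      = n ^ s * (n - 1)! := by
    exact_mod_cast Hypergraph.card_rootedHypertrees_mul hb hn
  rw [Hypergraph.natCard_rootedHypertrees, eq_div_iff (by positivity)]
  linear_combination h
end

section
/- The exponential generating function T(z) = Σ_{s≥0} ((n-1)!/(((b-1)!)^s s!)) n^s · z^n/n! with n = s(b-1)+1 satisfies the functional equation T(z) = z·exp(T(z)^{b-1}/(b-1)!). -/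
/-!
Write `q = b - 1` and let `A_n(x) = x (x + n q)^(n-1)` be the Abel polynomials. Then
`T(z) = z E_1(z^q / q!)`, where `E_x(w) = ∑ A_n(x) wⁿ / n!`. Abel polynomials are of binomial
type (proved by differentiating, since `A_n' = n A_{n-1}(X + q)`), which says exactly that
`E_x E_y = E_{x+y}`. Hence `T^q / q! = (w E_q)(z^q / q!)`, and the functional equation reduces to
`exp (w E_q(w)) = E_1(w)`, whose coefficients agree by the binomial theorem.
-/

open PowerSeries

/-- Formal composition `f ∘ u` of power series, valid when `u` has zero
constant term (then `coeff m (u^k) = 0` for `k > m`). -/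
noncomputable def pscomp (f u : PowerSeries ℚ) : PowerSeries ℚ :=
  PowerSeries.mk fun m => ∑ k ∈ Finset.range (m + 1),
    PowerSeries.coeff k f * PowerSeries.coeff m (u ^ k)

/-- The exponential generating function of rooted `b`-uniform hypertrees:
its `n`-th coefficient is `a_n/n!` where `a_n = (n-1)!·n^s/((b-1)!^s·s!)` when
`n = s(b-1)+1` and `a_n = 0` otherwise. -/
noncomputable def hypertreeEGF (b : ℕ) : PowerSeries ℚ :=
  PowerSeries.mk fun m =>
    if 1 ≤ m ∧ (b - 1) ∣ (m - 1) then
      (Nat.factorial (m - 1) * m ^ ((m - 1) / (b - 1)) : ℚ) /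
        ((Nat.factorial (b - 1) : ℚ) ^ ((m - 1) / (b - 1)) *
          (Nat.factorial ((m - 1) / (b - 1)) : ℚ) * (Nat.factorial m : ℚ))
    else 0

open Finset
open scoped Nat

namespace Polynomial

variable {R : Type*} [CommRing R]

noncomputable def abelPoly (q : R) : ℕ → R[X]
  | 0 => 1
  | n + 1 => X * (X + C ((n + 1 : ℕ) * q)) ^ n

@[simp]
lemma abelPoly_zero (q : R) : abelPoly q 0 = 1 := rfl

lemma abelPoly_succ (q : R) (n : ℕ) :
    abelPoly q (n + 1) = X * (X + C ((n + 1 : ℕ) * q)) ^ n := rfl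

lemma abelPoly_eval_zero (q : R) (n : ℕ) :
    (abelPoly q n).eval 0 = if n = 0 then 1 else 0 := by
  cases n <;> simp [abelPoly_succ]

lemma add_mul_abelPoly_eval (q x : R) (n : ℕ) :
    (x + n * q) * (abelPoly q n).eval x = x * (x + n * q) ^ n := by
  cases n <;> simp [abelPoly_succ]; ring

lemma derivative_abelPoly_succ (q : R) (n : ℕ) :
    derivative (abelPoly q (n + 1)) = (n + 1 : R[X]) * (abelPoly q n).comp (X + C q) := by
  cases n with
  | zero => simp [abelPoly_succ]
  | succ n =>
    simp only [abelPoly_succ, map_mul, map_natCast]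
    simp [derivative_pow]
    ring

lemma eq_of_derivative_eq_of_eval_zero_eq [IsAddTorsionFree R] {p r : R[X]}
    (hd : derivative p = derivative r) (h0 : p.eval 0 = r.eval 0) : p = r := by
  have hc := eq_C_of_derivative_eq_zero (p := p - r) (by rw [derivative_sub, hd, sub_self])
  rwa [coeff_zero_eq_eval_zero, eval_sub, h0, sub_self, map_zero, sub_eq_zero] at hc

lemma abelPoly_comp_X_add_C [IsAddTorsionFree R] (q : R) (n : ℕ) (y : R) :
    (abelPoly q n).comp (X + C y) =
      ∑ k ∈ range (n + 1), C (n.choose k * (abelPoly q (n - k)).eval y) * abelPoly q k := by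
  induction n generalizing y with
  | zero => simp
  | succ n ih =>
    apply eq_of_derivative_eq_of_eval_zero_eq
    · have hshift : (X + C q).comp (X + C y) = (X + C y).comp (X + C q) := by
        simp only [add_comp, X_comp, C_comp]; ring
      rw [derivative_comp, derivative_X_add_C, one_mul, derivative_abelPoly_succ, mul_comp,
        comp_assoc, hshift, ← comp_assoc, ih, Polynomial.sum_comp, derivative_sum,
        sum_range_succ' _ (n + 1), mul_sum]
      simp only [derivative_mul, derivative_C, zero_mul, zero_add, derivative_abelPoly_succ,
        abelPoly_zero, derivative_one, mul_zero, add_zero, mul_comp, C_comp, natCast_comp,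
        add_comp, one_comp]
      refine sum_congr rfl fun k _ => ?_
      have hchoose := congrArg (Nat.cast : ℕ → R[X]) (Nat.add_one_mul_choose_eq n k)
      push_cast at hchoose
      rw [Nat.add_sub_add_right, map_mul, map_mul, map_natCast, map_natCast]
      linear_combination (C (eval y (abelPoly q (n - k))) * (abelPoly q k).comp (X + C q)) * hchoose
    · simp [eval_finsetSum, abelPoly_eval_zero]

lemma abelPoly_eval_add [IsAddTorsionFree R] (q x y : R) (n : ℕ) :
    (abelPoly q n).eval (x + y) =
      ∑ p ∈ antidiagonal n, n.choose p.1 * (abelPoly q p.1).eval x * (abelPoly q p.2).eval y := by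
  have h := congrArg (eval x) (abelPoly_comp_X_add_C q n y)
  simp only [eval_comp, eval_add, eval_X, eval_C, eval_finsetSum, eval_mul] at h
  rw [h, Nat.sum_antidiagonal_eq_sum_range_succ_mk]
  exact sum_congr rfl fun k _ => by ring

lemma choose_succ_mul_abelPoly_eval (q : R) {n k : ℕ} (hk : k ≤ n) :
    ((n + 1).choose (k + 1) : R) * (abelPoly q (n - k)).eval ((k + 1) * q) =
      n.choose k * ((n + 1) * q) ^ (n - k) := by
  obtain ⟨m, rfl⟩ := Nat.exists_eq_add_of_le hk
  rw [Nat.add_sub_cancel_left]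
  cases m with
  | zero => simp
  | succ m =>
    have hchoose := congrArg (Nat.cast : ℕ → R) (Nat.add_one_mul_choose_eq (k + m + 1) k)
    rw [← add_assoc]
    push_cast at hchoose ⊢
    simp only [abelPoly_succ, eval_mul, eval_X, eval_pow, eval_add, eval_C]
    push_cast
    linear_combination -(q * ((k + m + 2) * q) ^ m) * hchoose

lemma sum_choose_mul_abelPoly_eval_mul (q : R) (n : ℕ) :
    ∑ k ∈ range (n + 1), (n.choose k : R) * (abelPoly q (n - k)).eval (k * q) =
      (abelPoly q n).eval 1 := by
  cases n with
  | zero => simp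
  | succ n =>
    have hterm : ∀ k ∈ range (n + 1), ((n + 1).choose (k + 1) : R) *
        (abelPoly q (n + 1 - (k + 1))).eval ((k + 1 : ℕ) * q) =
          1 ^ k * ((n + 1) * q) ^ (n - k) * n.choose k := fun k hk => by
      rw [Nat.add_sub_add_right, Nat.cast_succ,
        choose_succ_mul_abelPoly_eval q (Nat.lt_succ_iff.mp (mem_range.mp hk))]
      ring
    rw [sum_range_succ', sum_congr rfl hterm, ← add_pow]
    simp [abelPoly_succ]

end Polynomial

namespace PowerSeries

variable {R : Type*} [CommRing R]

lemma constantCoeff_rescale (r : R) (f : R⟦X⟧) : constantCoeff (rescale r f) = constantCoeff f := by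
  rw [← coeff_zero_eq_constantCoeff_apply, coeff_rescale, pow_zero, one_mul,
    coeff_zero_eq_constantCoeff_apply]

lemma coeff_subst_eq_sum_range {u : R⟦X⟧} (hu : constantCoeff u = 0) (f : R⟦X⟧) (n : ℕ) :
    coeff n (f.subst u) = ∑ k ∈ range (n + 1), coeff k f * coeff n (u ^ k) := by
  rw [coeff_subst' (HasSubst.of_constantCoeff_zero' hu),
    finsum_eq_sum_of_support_subset (s := range (n + 1))]
  · simp only [smul_eq_mul]
  · intro k hk
    rw [coe_range, Set.mem_Iio, Nat.lt_succ_iff]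
    by_contra! hnk
    exact hk (smul_eq_zero_of_right _ (coeff_of_lt_order n
      ((ENat.natCast_lt_natCast.mpr hnk).trans_le (le_order_pow_of_constantCoeff_eq_zero k hu))))

lemma rescale_subst {g : R⟦X⟧} (hg : HasSubst g) (r : R) (f : R⟦X⟧) :
    rescale r (f.subst g) = f.subst (rescale r g) := by
  rw [rescale_eq_subst, rescale_eq_subst, subst_comp_subst_apply hg (HasSubst.smul_X' r)]

lemma subst_expand_rescale {g : R⟦X⟧} (hg : constantCoeff g = 0) (p : ℕ) (hp : p ≠ 0) (r : R)
    (f : R⟦X⟧) : f.subst (expand p hp (rescale r g)) = expand p hp (rescale r (f.subst g)) := by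
  have hrg : HasSubst (rescale r g) :=
    HasSubst.of_constantCoeff_zero' (by rw [constantCoeff_rescale, hg])
  rw [rescale_subst (HasSubst.of_constantCoeff_zero' hg), expand_apply, expand_apply,
    subst_comp_subst_apply hrg (HasSubst.X_pow hp)]

section AbelEGF

open Polynomial (abelPoly)

variable {K : Type*} [Field K]

noncomputable def abelEGF (q x : K) : K⟦X⟧ :=
  PowerSeries.mk fun n => (abelPoly q n).eval x / n !

lemma coeff_abelEGF (q x : K) (n : ℕ) : coeff n (abelEGF q x) = (abelPoly q n).eval x / n ! :=
  coeff_mk _ _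

lemma abelEGF_zero (q : K) : abelEGF q 0 = 1 := by
  ext n
  rw [coeff_abelEGF, Polynomial.abelPoly_eval_zero, coeff_one]
  split_ifs <;> simp_all

variable [CharZero K]

lemma abelEGF_add (q x y : K) : abelEGF q (x + y) = abelEGF q x * abelEGF q y := by
  ext n
  rw [coeff_mul, coeff_abelEGF, Polynomial.abelPoly_eval_add, sum_div]
  refine sum_congr rfl fun p hp => ?_
  rw [HasAntidiagonal.mem_antidiagonal] at hp
  subst hp
  have hfact : ((p.1 + p.2)! : K) ≠ 0 := Nat.cast_ne_zero.mpr (Nat.factorial_ne_zero _)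
  rw [coeff_abelEGF, coeff_abelEGF, Nat.cast_add_choose]
  field_simp

lemma abelEGF_pow (q x : K) (k : ℕ) : abelEGF q x ^ k = abelEGF q (k * x) := by
  induction k with
  | zero => simp [abelEGF_zero]
  | succ k ih => rw [pow_succ, ih, ← abelEGF_add]; push_cast; ring_nf

lemma exp_subst_X_mul_abelEGF [Algebra ℚ K] (q : K) :
    (exp K).subst (X * abelEGF q q) = abelEGF q 1 := by
  ext n
  rw [coeff_subst_eq_sum_range (by simp), coeff_abelEGF,
    ← Polynomial.sum_choose_mul_abelPoly_eval_mul, sum_div]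
  refine sum_congr rfl fun k hk => ?_
  have hkn : k ≤ n := Nat.lt_succ_iff.mp (mem_range.mp hk)
  rw [mul_pow, abelEGF_pow, coeff_exp, coeff_X_pow_mul', if_pos hkn, coeff_abelEGF,
    Nat.cast_choose K hkn]
  simp only [map_div₀, map_one, map_natCast]
  have hfact : (n ! : K) ≠ 0 := Nat.cast_ne_zero.mpr (Nat.factorial_ne_zero n)
  field_simp

end AbelEGF

end PowerSeries

lemma pscomp_eq_subst {u : ℚ⟦X⟧} (hu : constantCoeff u = 0) (f : ℚ⟦X⟧) :
    pscomp f u = f.subst u := by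
  ext n
  rw [pscomp, coeff_mk, coeff_subst_eq_sum_range hu]

lemma hypertreeEGF_succ (q : ℕ) (hq : q ≠ 0) :
    hypertreeEGF (q + 1) = X * expand q hq (rescale (q ! : ℚ)⁻¹ (abelEGF (q : ℚ) 1)) := by
  ext n
  cases n with
  | zero => simp [hypertreeEGF]
  | succ m =>
    rw [coeff_succ_X_mul, coeff_expand, coeff_rescale, hypertreeEGF, coeff_mk]
    simp only [Nat.add_sub_cancel, le_add_iff_nonneg_left, Nat.zero_le, true_and]
    split_ifs with h
    · obtain ⟨s, rfl⟩ := h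
      rw [Nat.mul_div_cancel_left s (Nat.pos_of_ne_zero hq), coeff_abelEGF, Nat.factorial_succ]
      have hA := Polynomial.add_mul_abelPoly_eval (q : ℚ) 1 s
      have hF : ((q * s)! : ℚ) ≠ 0 := by positivity
      have hQ : (q ! : ℚ) ≠ 0 := by positivity
      push_cast
      rw [inv_pow]
      field_simp
      linear_combination -hA
    · rfl

/-- The rooted hypertree EGF satisfies `T(z) = z·exp(T(z)^{b-1}/(b-1)!)`. -/
theorem hypertreeEGF_functional_equation (b : ℕ) (hb : 2 ≤ b) :
    hypertreeEGF b = PowerSeries.X *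
      pscomp (PowerSeries.exp ℚ)
        (PowerSeries.C ((Nat.factorial (b - 1) : ℚ))⁻¹ * (hypertreeEGF b) ^ (b - 1)) := by
  obtain ⟨q, rfl⟩ : ∃ q, b = q + 1 := ⟨b - 1, by omega⟩
  have hq : q ≠ 0 := by omega
  have hpow : C (q ! : ℚ)⁻¹ * hypertreeEGF (q + 1) ^ q =
      expand q hq (rescale (q ! : ℚ)⁻¹ (X * abelEGF (q : ℚ) q)) := by
    rw [hypertreeEGF_succ q hq, mul_pow, ← map_pow, ← map_pow, abelEGF_pow, mul_one, map_mul,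
      map_mul, rescale_X, map_mul, expand_C, expand_X, mul_assoc]
  have h0 : constantCoeff (X * abelEGF (q : ℚ) q) = 0 := by simp
  rw [Nat.add_sub_cancel, hpow,
    pscomp_eq_subst (by rw [constantCoeff_expand, constantCoeff_rescale, h0]),
    subst_expand_rescale h0, exp_subst_X_mul_abelEGF, ← hypertreeEGF_succ]
end

section
/- In any b-uniform basic complex component of excess ℓ ≥ 1 (a smooth connected hypergraph with all chains of minimal length), the number p of chains satisfies p ≤ 3ℓ, and this bound is attained by some component. -/
/-- Degree of a vertex: the number of hyperedges containing it. -/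
def degree {n : ℕ} (E : Finset (Finset (Fin n))) (v : Fin n) : ℕ :=
  (E.filter fun e => v ∈ e).card

/-- A smooth hypergraph has no leaf, i.e. no group of `b-1` degree-one
vertices inside a common hyperedge. -/
def SmoothHG {n : ℕ} (b : ℕ) (E : Finset (Finset (Fin n))) : Prop :=
  ¬ ∃ e ∈ E, ∃ S ⊆ e, S.card = b - 1 ∧ ∀ v ∈ S, degree E v = 1

/-- A special hyperedge contains at least `3` vertices of degree `≥ 2`. -/
def SpecialEdge {n : ℕ} (E : Finset (Finset (Fin n))) (e : Finset (Fin n)) : Prop :=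
  e ∈ E ∧ 3 ≤ (e.filter fun v => 2 ≤ degree E v).card

/-- A special vertex belongs to a special hyperedge or has degree `≥ 3`. -/
def SpecialVtx {n : ℕ} (E : Finset (Finset (Fin n))) (v : Fin n) : Prop :=
  (∃ e, SpecialEdge E e ∧ v ∈ e) ∨ 3 ≤ degree E v

/-- Two non-special hyperedges are chain-linked if they share a non-special
vertex of degree `2`. -/
def chainLink {n : ℕ} (E : Finset (Finset (Fin n))) (e f : Finset (Fin n)) : Prop :=
  e ∈ E ∧ f ∈ E ∧ ¬ SpecialEdge E e ∧ ¬ SpecialEdge E f ∧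
    ∃ v, v ∈ e ∧ v ∈ f ∧ degree E v = 2 ∧ ¬ SpecialVtx E v

/-- A chain is a connected class of non-special hyperedges under `chainLink`;
`numChains` is the number of such classes. -/
noncomputable def numChains {n : ℕ} (E : Finset (Finset (Fin n))) : ℕ :=
  Set.ncard {C : Set (Finset (Fin n)) | ∃ e ∈ E, ¬ SpecialEdge E e ∧
    C = {f | Relation.ReflTransGen (chainLink E) e f}}

/-- A basic structure has all of its chains of minimal length:
α-chains have length `2`, β-chains have length `1`, so every chain class
has at most `2` hyperedges. -/
noncomputable def Basic {n : ℕ} (E : Finset (Finset (Fin n))) : Prop :=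
  ∀ e ∈ E, ¬ SpecialEdge E e →
    ({f | Relation.ReflTransGen (chainLink E) e f}).ncard ≤ 2

/-!
Let `D` be the set of vertices of degree at least `2`, and split the degree of a vertex into the
numbers `d_s` and `d_n` of special and of non-special hyperedges through it. Smoothness leaves
exactly two vertices of `D` on each non-special hyperedge, and in a basic structure every chain has
one more hyperedge than inner vertices: a chain has at most two hyperedges, and two hyperedges
sharing two inner vertices would form a whole component of excess `0`. Double counting the
incidences between `D` and the hyperedges then gives
`ℓ = p + ∑_{v ∈ D} d_s(v) - #(special hyperedges) - #(special vertices in D)`.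
Each special hyperedge contributes at least `3` to `∑ d_s`, and each special vertex in `D` has
`d_n + 2 d_s ≥ 3`, where the `d_n` of these vertices sum to `2p`; together this is `p ≤ 3ℓ`.
Equality needs `2ℓ` special vertices of degree `3` and no special hyperedge, which is what
subdividing every arc of a connected cubic multigraph on `2ℓ` vertices produces.
-/

open Finset Relation

section General

open Classical

variable {n b ℓ : ℕ} {E F : Finset (Finset (Fin n))} {e f g e₀ : Finset (Fin n)}
  {v w w' x : Fin n}

def sharedVertices (E : Finset (Finset (Fin n))) : Finset (Fin n) := {v | 2 ≤ degree E v}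

noncomputable def specialEdges (E : Finset (Finset (Fin n))) : Finset (Finset (Fin n)) :=
  {e ∈ E | SpecialEdge E e}

noncomputable def plainEdges (E : Finset (Finset (Fin n))) : Finset (Finset (Fin n)) :=
  {e ∈ E | ¬ SpecialEdge E e}

noncomputable def specialDegree (E : Finset (Finset (Fin n))) (v : Fin n) : ℕ :=
  #{e ∈ specialEdges E | v ∈ e}

noncomputable def plainDegree (E : Finset (Finset (Fin n))) (v : Fin n) : ℕ :=
  #{e ∈ plainEdges E | v ∈ e}

noncomputable def branchVertices (E : Finset (Finset (Fin n))) : Finset (Fin n) :=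
  {v ∈ sharedVertices E | SpecialVtx E v}

noncomputable def chainVertices (E : Finset (Finset (Fin n))) : Finset (Fin n) :=
  {v ∈ sharedVertices E | ¬ SpecialVtx E v}

def chainClass (E : Finset (Finset (Fin n))) (e : Finset (Fin n)) : Set (Finset (Fin n)) :=
  {f | ReflTransGen (chainLink E) e f}

def chainClassOf (E : Finset (Finset (Fin n))) (w : Fin n) : Set (Finset (Fin n)) :=
  {f | ∃ e ∈ E, w ∈ e ∧ ReflTransGen (chainLink E) e f}

instance (E : Finset (Finset (Fin n))) : Std.Symm (link E) :=
  ⟨fun _ _ ⟨e, he, hx, hy⟩ => ⟨e, he, hy, hx⟩⟩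

lemma sum_card_filter_mem {α : Type*} [DecidableEq α] (s : Finset α) (F : Finset (Finset α)) :
    ∑ a ∈ s, #{e ∈ F | a ∈ e} = ∑ e ∈ F, #{a ∈ s | a ∈ e} :=
  sum_card_bipartiteAbove_eq_sum_card_bipartiteBelow _

lemma degree_pos_of_mem (he : e ∈ E) (hv : v ∈ e) : 0 < degree E v :=
  card_pos.2 ⟨e, mem_filter.2 ⟨he, hv⟩⟩

lemma eq_of_degree_le_one (hv : degree E v ≤ 1) (he : e ∈ E) (hf : f ∈ E)
    (hve : v ∈ e) (hvf : v ∈ f) : e = f :=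
  card_le_one.1 hv e (mem_filter.2 ⟨he, hve⟩) f (mem_filter.2 ⟨hf, hvf⟩)

lemma two_le_degree_of_mem (hef : e ≠ f) (he : e ∈ E) (hf : f ∈ E)
    (hve : v ∈ e) (hvf : v ∈ f) : 2 ≤ degree E v := by
  by_contra h
  exact hef (eq_of_degree_le_one (by omega) he hf hve hvf)

lemma eq_or_eq_of_degree_eq_two (hv : degree E v = 2) (hef : e ≠ f) (he : e ∈ E) (hf : f ∈ E)
    (hg : g ∈ E) (hve : v ∈ e) (hvf : v ∈ f) (hvg : v ∈ g) : g = e ∨ g = f := by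
  have hsub : {e, f} ⊆ {h ∈ E | v ∈ h} := by
    simp only [insert_subset_iff, singleton_subset_iff, mem_filter]
    exact ⟨⟨he, hve⟩, hf, hvf⟩
  have hpair := eq_of_subset_of_card_le hsub (by rw [card_pair hef]; exact hv.le)
  have hg' : g ∈ ({h ∈ E | v ∈ h} : Finset _) := mem_filter.2 ⟨hg, hvg⟩
  simpa [← hpair] using hg'

lemma sum_degree (hu : Uniform b E) : ∑ v, degree E v = b * #E := by
  simp only [degree, sum_card_filter_mem, filter_univ_mem]
  rw [sum_const_nat hu, mul_comm]

theorem Connected.exists_mem (hc : Connected E) (he : e ∈ E) (hx : x ∈ e) (v : Fin n) :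
    ∃ f ∈ E, v ∈ f := by
  rcases (hc x v).cases_tail with rfl | ⟨_, _, f, hf, -, hvf⟩
  exacts [⟨e, he, hx⟩, ⟨f, hf, hvf⟩]

lemma mem_sharedVertices : v ∈ sharedVertices E ↔ 2 ≤ degree E v := by
  simp [sharedVertices]

lemma mem_plainEdges : e ∈ plainEdges E ↔ e ∈ E ∧ ¬ SpecialEdge E e := mem_filter

lemma mem_chainVertices : v ∈ chainVertices E ↔ degree E v = 2 ∧ ¬ SpecialVtx E v := by
  have : ¬ SpecialVtx E v → ¬ 3 ≤ degree E v := fun h h3 => h (Or.inr h3)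
  simp only [chainVertices, mem_filter, mem_sharedVertices]
  constructor
  · rintro ⟨h2, hv⟩; exact ⟨by have := this hv; omega, hv⟩
  · rintro ⟨h2, hv⟩; exact ⟨h2.ge, hv⟩

lemma card_specialEdges_add_card_plainEdges : #(specialEdges E) + #(plainEdges E) = #E :=
  card_filter_add_card_filter_not _

lemma specialDegree_add_plainDegree (v : Fin n) :
    specialDegree E v + plainDegree E v = degree E v := by
  simp only [specialDegree, plainDegree, specialEdges, plainEdges, degree, filter_filter]
  rw [← card_filter_add_card_filter_not (s := {e ∈ E | v ∈ e}) (SpecialEdge E)]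
  simp only [filter_filter, and_comm]

lemma card_branchVertices_add_card_chainVertices :
    #(branchVertices E) + #(chainVertices E) = #(sharedVertices E) :=
  card_filter_add_card_filter_not _

lemma sum_branchVertices_add_sum_chainVertices (φ : Fin n → ℕ) :
    ∑ v ∈ branchVertices E, φ v + ∑ v ∈ chainVertices E, φ v = ∑ v ∈ sharedVertices E, φ v :=
  sum_filter_add_sum_filter_not _ _ _

lemma filter_mem_sharedVertices (e : Finset (Fin n)) :
    {v ∈ sharedVertices E | v ∈ e} = {v ∈ e | 2 ≤ degree E v} := by
  ext v; simp [mem_sharedVertices, and_comm]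

lemma not_specialEdge_of_mem (hv : ¬ SpecialVtx E v) (hve : v ∈ e) : ¬ SpecialEdge E e :=
  fun he => hv (Or.inl ⟨e, he, hve⟩)

lemma specialDegree_eq_zero (hv : ¬ SpecialVtx E v) : specialDegree E v = 0 := by
  simp only [specialDegree, specialEdges, card_eq_zero, filter_eq_empty_iff, mem_filter]
  exact fun e he hve => not_specialEdge_of_mem hv hve he.2

lemma three_le_plainDegree_add_two_mul_specialDegree (hv : v ∈ branchVertices E) :
    3 ≤ plainDegree E v + 2 * specialDegree E v := by
  simp only [branchVertices, mem_filter, mem_sharedVertices] at hv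
  obtain ⟨h2, hsp⟩ := hv
  have := specialDegree_add_plainDegree (E := E) v
  rcases Nat.eq_zero_or_pos (specialDegree E v) with h0 | _
  · have h3 : 3 ≤ degree E v := hsp.resolve_left fun ⟨e, he, hve⟩ => by
      have : 0 < specialDegree E v := card_pos.2 ⟨e, by simp [specialEdges, he.1, he, hve]⟩
      omega
    omega
  · omega

lemma SmoothHG.two_le_card_shared (hs : SmoothHG b E) (hu : Uniform b E) (he : e ∈ E) :
    2 ≤ #{v ∈ e | 2 ≤ degree E v} := by
  by_contra h
  have hsplit := card_filter_add_card_filter_not (s := e) (fun v => 2 ≤ degree E v)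
  obtain ⟨S, hS, hcard⟩ := exists_subset_card_eq
    (show b - 1 ≤ #{v ∈ e | ¬ 2 ≤ degree E v} by rw [← hu e he]; omega)
  refine hs ⟨e, he, S, hS.trans (filter_subset _ _), hcard, fun v hv => ?_⟩
  have hv := mem_filter.1 (hS hv)
  have := degree_pos_of_mem he hv.1
  omega

lemma SmoothHG.card_shared_of_mem_plainEdges (hs : SmoothHG b E) (hu : Uniform b E)
    (he : e ∈ plainEdges E) : #{v ∈ e | 2 ≤ degree E v} = 2 := by
  rw [mem_plainEdges] at he
  have := hs.two_le_card_shared hu he.1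
  have : ¬ 3 ≤ #{v ∈ e | 2 ≤ degree E v} := fun h => he.2 ⟨he.1, h⟩
  omega

lemma sum_plainDegree_sharedVertices (hs : SmoothHG b E) (hu : Uniform b E) :
    ∑ v ∈ sharedVertices E, plainDegree E v = 2 * #(plainEdges E) := by
  simp only [plainDegree, sum_card_filter_mem, filter_mem_sharedVertices]
  rw [sum_const_nat fun e he => hs.card_shared_of_mem_plainEdges hu he, mul_comm]

lemma sum_plainDegree_chainVertices :
    ∑ v ∈ chainVertices E, plainDegree E v = 2 * #(chainVertices E) := by
  rw [mul_comm, ← smul_eq_mul, ← sum_const]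
  refine sum_congr rfl fun v hv => ?_
  rw [mem_chainVertices] at hv
  have := specialDegree_add_plainDegree (E := E) v
  rw [specialDegree_eq_zero hv.2] at this
  omega

lemma sum_specialDegree_branchVertices :
    ∑ v ∈ branchVertices E, specialDegree E v = ∑ v ∈ sharedVertices E, specialDegree E v := by
  rw [← sum_branchVertices_add_sum_chainVertices, sum_eq_zero fun v hv =>
    specialDegree_eq_zero (mem_chainVertices.1 hv).2, add_zero]

lemma three_mul_card_specialEdges_le :
    3 * #(specialEdges E) ≤ ∑ v ∈ sharedVertices E, specialDegree E v := by
  simp only [specialDegree, sum_card_filter_mem, filter_mem_sharedVertices]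
  rw [mul_comm, ← smul_eq_mul, ← sum_const]
  exact sum_le_sum fun e he => (mem_filter.1 he).2.2

theorem Connected.sum_degree_sharedVertices_add (hc : Connected E) (hu : Uniform b E)
    (hb : 0 < b) (hE : E.Nonempty) :
    ∑ v ∈ sharedVertices E, degree E v + n = b * #E + #(sharedVertices E) := by
  obtain ⟨e, he⟩ := hE
  obtain ⟨x, hx⟩ : e.Nonempty := card_pos.1 (hu e he ▸ hb)
  have hdeg1 : ∀ v ∉ sharedVertices E, degree E v = 1 := fun v hv => by
    obtain ⟨f, hf, hvf⟩ := hc.exists_mem he hx v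
    have := degree_pos_of_mem hf hvf
    rw [mem_sharedVertices] at hv
    omega
  have hrest : ∑ v ∈ {v | ¬ 2 ≤ degree E v}, degree E v = #{v | ¬ 2 ≤ degree E v} := by
    rw [card_eq_sum_ones]
    exact sum_congr rfl fun v hv => hdeg1 v (by simpa [mem_sharedVertices] using hv)
  have hsplit := sum_filter_add_sum_filter_not univ (fun v => 2 ≤ degree E v) (degree E)
  have hcard := card_filter_add_card_filter_not (s := (univ : Finset (Fin n)))
    (fun v => 2 ≤ degree E v)
  rw [hrest, sum_degree hu] at hsplit
  rw [card_univ, Fintype.card_fin] at hcard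
  simp only [sharedVertices]
  omega

lemma chainClass_subset_plainEdges (he : e ∈ plainEdges E) :
    chainClass E e ⊆ (plainEdges E : Set (Finset (Fin n))) := by
  intro g hg
  rcases ReflTransGen.cases_tail hg with rfl | ⟨_, _, -, hg, -, hsg, -⟩
  exacts [he, mem_plainEdges.2 ⟨hg, hsg⟩]

lemma numChains_eq_card_image : numChains E = #((plainEdges E).image (chainClass E)) := by
  rw [numChains, ← Set.ncard_coe_finset]
  congr 1
  ext C
  simp [mem_plainEdges, chainClass, and_assoc, eq_comm]

lemma chainLink_of_mem_chainVertices (hw : w ∈ chainVertices E) (he : e ∈ E) (hf : f ∈ E)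
    (hwe : w ∈ e) (hwf : w ∈ f) : chainLink E e f := by
  rw [mem_chainVertices] at hw
  exact ⟨he, hf, not_specialEdge_of_mem hw.2 hwe, not_specialEdge_of_mem hw.2 hwf,
    w, hwe, hwf, hw⟩

lemma chainClassOf_eq (hw : w ∈ chainVertices E) (he : e ∈ E) (hwe : w ∈ e) :
    chainClassOf E w = chainClass E e := by
  ext g
  exact ⟨fun ⟨f, hf, hwf, hfg⟩ =>
    ReflTransGen.head (chainLink_of_mem_chainVertices hw he hf hwe hwf) hfg,
    fun hg => ⟨e, he, hwe, hg⟩⟩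

lemma exists_mem_chainVertices_of_mem_chainClass (hfe : f ∈ chainClass E e) (hef : e ≠ f) :
    ∃ v ∈ chainVertices E, chainClassOf E v = chainClass E e := by
  rcases ReflTransGen.cases_head hfe with rfl | ⟨g, ⟨he, -, -, -, v, hve, -, hv⟩, -⟩
  · exact absurd rfl hef
  have hv : v ∈ chainVertices E := mem_chainVertices.2 hv
  exact ⟨v, hv, chainClassOf_eq hv he hve⟩

lemma exists_pair_of_mem_chainVertices (hw : w ∈ chainVertices E) :
    ∃ e f, e ≠ f ∧ e ∈ E ∧ f ∈ E ∧ w ∈ e ∧ w ∈ f := by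
  obtain ⟨e, f, hef, hpair⟩ := card_eq_two.1 (mem_chainVertices.1 hw).1
  have he : e ∈ ({g ∈ E | w ∈ g} : Finset _) := by rw [hpair]; simp
  have hf : f ∈ ({g ∈ E | w ∈ g} : Finset _) := by rw [hpair]; simp
  rw [mem_filter] at he hf
  exact ⟨e, f, hef, he.1, hf.1, he.2, hf.2⟩

lemma Basic.card_fiber_le_two (hba : Basic E) (he₀ : e₀ ∈ plainEdges E) :
    #{e ∈ plainEdges E | chainClass E e = chainClass E e₀} ≤ 2 := by
  rw [mem_plainEdges] at he₀
  refine le_trans ?_ (hba e₀ he₀.1 he₀.2)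
  rw [← Set.ncard_coe_finset]
  refine Set.ncard_le_ncard (fun e he => ?_) ((plainEdges E).finite_toSet.subset
    (chainClass_subset_plainEdges (mem_plainEdges.2 he₀)))
  rw [mem_coe, mem_filter] at he
  change e ∈ chainClass E e₀
  rw [← he.2]
  exact ReflTransGen.refl

theorem Connected.subset_of_closed (hc : Connected E) (hne : ∀ g ∈ E, g.Nonempty)
    (hf : f ∈ F) (hx : x ∈ f) (hF : ∀ g ∈ E, ∀ f ∈ F, ∀ y ∈ f, y ∈ g → g ∈ F) : E ⊆ F := by
  have hcover : ∀ y, ∃ f ∈ F, y ∈ f := fun y => by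
    induction hc x y with
    | refl => exact ⟨f, hf, hx⟩
    | tail _ hyz ih =>
      obtain ⟨f, hf, hyf⟩ := ih
      obtain ⟨g, hg, hy, hz⟩ := hyz
      exact ⟨g, hF g hg f hf _ hyf hy, hz⟩
  intro g hg
  obtain ⟨y, hy⟩ := hne g hg
  obtain ⟨f, hf, hyf⟩ := hcover y
  exact hF g hg f hf y hyf hy

lemma SmoothHG.filter_shared_eq_pair (hs : SmoothHG b E) (hu : Uniform b E)
    (he : e ∈ plainEdges E) (hww : w ≠ w') (hw : 2 ≤ degree E w) (hw' : 2 ≤ degree E w')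
    (hwe : w ∈ e) (hw'e : w' ∈ e) : {v ∈ e | 2 ≤ degree E v} = {w, w'} := by
  refine (eq_of_subset_of_card_le ?_ ?_).symm
  · simp [insert_subset_iff, hwe, hw'e, hw, hw']
  · rw [hs.card_shared_of_mem_plainEdges hu he, card_pair hww]

lemma sub_one_mul_card_le_of_subset_pair (hu : Uniform b E) (hb : 0 < b) (he : e ∈ E)
    (hf : f ∈ E) (hpair : E ⊆ {e, f}) (hinter : #(e ∩ f) ≤ 2) : ((b : ℤ) - 1) * #E ≤ n := by
  have hunion := card_union_add_card_inter e f
  have hcard : #E ≤ 2 := (card_le_card hpair).trans card_le_two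
  have hn : #(e ∪ f) ≤ n := (card_le_univ _).trans_eq (Fintype.card_fin n)
  rw [hu e he, hu f hf] at hunion
  have : ((b : ℤ) - 1) * #E ≤ ((b : ℤ) - 1) * 2 :=
    mul_le_mul_of_nonneg_left (by exact_mod_cast hcard) (by omega)
  omega

theorem not_two_chainVertices_mem_inter (hu : Uniform b E) (hb : 2 ≤ b) (hs : SmoothHG b E)
    (hc : Connected E) (hℓ : 1 ≤ ℓ) (hx : ((b : ℤ) - 1) * #E = n + ℓ)
    (hef : e ≠ f) (he : e ∈ E) (hf : f ∈ E) (hww : w ≠ w')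
    (hw : w ∈ chainVertices E) (hw' : w' ∈ chainVertices E)
    (hwe : w ∈ e) (hwf : w ∈ f) (hw'e : w' ∈ e) (hw'f : w' ∈ f) : False := by
  rw [mem_chainVertices] at hw hw'
  have hmem : ∀ h ∈ ({e, f} : Finset _), h ∈ E ∧ w ∈ h ∧ w' ∈ h := by
    simp only [mem_insert, mem_singleton]
    rintro h (rfl | rfl)
    exacts [⟨he, hwe, hw'e⟩, ⟨hf, hwf, hw'f⟩]
  have hshared : ∀ h ∈ ({e, f} : Finset _), {v ∈ h | 2 ≤ degree E v} = {w, w'} := by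
    intro h hh
    obtain ⟨hE, hwh, hw'h⟩ := hmem h hh
    exact hs.filter_shared_eq_pair hu (mem_plainEdges.2 ⟨hE, not_specialEdge_of_mem hw.2 hwh⟩)
      hww hw.1.ge hw'.1.ge hwh hw'h
  have hpair : E ⊆ {e, f} := by
    refine hc.subset_of_closed (fun g hg => card_pos.1 (by rw [hu g hg]; omega))
      (mem_insert_self e {f}) hwe fun g hg h hh y hyh hyg => ?_
    by_cases hy : 2 ≤ degree E y
    · obtain ⟨hy2, hye, hyf⟩ : degree E y = 2 ∧ y ∈ e ∧ y ∈ f := by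
        have : y ∈ ({w, w'} : Finset _) := hshared h hh ▸ mem_filter.2 ⟨hyh, hy⟩
        rcases mem_insert.1 this with rfl | hy'
        exacts [⟨hw.1, hwe, hwf⟩, mem_singleton.1 hy' ▸ ⟨hw'.1, hw'e, hw'f⟩]
      simpa using eq_or_eq_of_degree_eq_two hy2 hef he hf hg hye hyf hyg
    · exact eq_of_degree_le_one (by omega) hg (hmem h hh).1 hyg hyh ▸ hh
  have hinter : #(e ∩ f) ≤ 2 := by
    refine (card_le_card fun y hy => ?_).trans (card_le_two (a := w) (b := w'))
    obtain ⟨hye, hyf⟩ := mem_inter.1 hy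
    rw [← hshared e (mem_insert_self e {f}), mem_filter]
    exact ⟨hye, two_le_degree_of_mem hef he hf hye hyf⟩
  have := sub_one_mul_card_le_of_subset_pair hu (by omega) he hf hpair hinter
  omega

lemma mem_fiber_of_mem_chainVertices (hw : w ∈ chainVertices E) (he : e ∈ E) (hwe : w ∈ e) :
    e ∈ ({e ∈ plainEdges E | chainClass E e = chainClassOf E w} : Finset _) :=
  mem_filter.2 ⟨mem_plainEdges.2 ⟨he, not_specialEdge_of_mem (mem_chainVertices.1 hw).2 hwe⟩,
    (chainClassOf_eq hw he hwe).symm⟩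

lemma card_fiber_plainEdges_eq (hu : Uniform b E) (hb : 2 ≤ b) (hs : SmoothHG b E)
    (hc : Connected E) (hba : Basic E) (hℓ : 1 ≤ ℓ) (hx : ((b : ℤ) - 1) * #E = n + ℓ)
    (he₀ : e₀ ∈ plainEdges E) :
    #{e ∈ plainEdges E | chainClass E e = chainClass E e₀} =
      #{w ∈ chainVertices E | chainClassOf E w = chainClass E e₀} + 1 := by
  set Ec : Finset _ := {e ∈ plainEdges E | chainClass E e = chainClass E e₀} with hEc
  set Wc : Finset _ := {w ∈ chainVertices E | chainClassOf E w = chainClass E e₀}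
  have hedges : ∀ w ∈ Wc, ∃ e f, e ≠ f ∧ e ∈ Ec ∧ f ∈ Ec ∧ w ∈ e ∧ w ∈ f := by
    intro w hw
    obtain ⟨hw, hwC⟩ := mem_filter.1 hw
    obtain ⟨e, f, hef, he, hf, hwe, hwf⟩ := exists_pair_of_mem_chainVertices hw
    rw [hEc, ← hwC]
    exact ⟨e, f, hef, mem_fiber_of_mem_chainVertices hw he hwe,
      mem_fiber_of_mem_chainVertices hw hf hwf, hwe, hwf⟩
  have hpos : 0 < #Ec := card_pos.2 ⟨e₀, mem_filter.2 ⟨he₀, rfl⟩⟩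
  have hle2 : #Ec ≤ 2 := hba.card_fiber_le_two he₀
  rcases (show #Ec = 1 ∨ #Ec = 2 by omega) with h1 | h2
  · obtain ⟨e, he⟩ := card_eq_one.1 h1
    suffices Wc = ∅ by rw [h1, this, card_empty]
    refine eq_empty_iff_forall_notMem.2 fun w hw => ?_
    obtain ⟨e₁, e₂, hne, h₁, h₂, -⟩ := hedges w hw
    rw [he, mem_singleton] at h₁ h₂
    exact hne (h₁.trans h₂.symm)
  · obtain ⟨e, f, hef, hpair⟩ := card_eq_two.1 h2
    obtain ⟨he, heC⟩ := mem_filter.1 (hpair ▸ mem_insert_self e {f} : e ∈ Ec)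
    obtain ⟨hf, hfC⟩ := mem_filter.1 (hpair ▸ mem_insert_of_mem (mem_singleton_self f) : f ∈ Ec)
    have hmem : ∀ w ∈ Wc, w ∈ e ∧ w ∈ f := by
      intro w hw
      obtain ⟨e₁, e₂, hne, h₁, h₂, hw₁, hw₂⟩ := hedges w hw
      rw [hpair, mem_insert, mem_singleton] at h₁ h₂
      rcases h₁ with rfl | rfl <;> rcases h₂ with rfl | rfl <;> simp_all
    have hle : #Wc ≤ 1 :=
      card_le_one.2 fun w hw w' hw' => by_contra fun hww =>
        not_two_chainVertices_mem_inter hu hb hs hc hℓ hx hef (mem_plainEdges.1 he).1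
          (mem_plainEdges.1 hf).1 hww (mem_filter.1 hw).1 (mem_filter.1 hw').1
          (hmem w hw).1 (hmem w hw).2 (hmem w' hw').1 (hmem w' hw').2
    have hne : Wc.Nonempty := by
      have hfe : f ∈ chainClass E e := by
        rw [heC, ← hfC]
        exact ReflTransGen.refl
      obtain ⟨v, hv, hvC⟩ := exists_mem_chainVertices_of_mem_chainClass hfe hef
      exact ⟨v, mem_filter.2 ⟨hv, hvC.trans heC⟩⟩
    have := hne.card_pos
    omega

theorem numChains_add_card_chainVertices (hu : Uniform b E) (hb : 2 ≤ b) (hs : SmoothHG b E)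
    (hc : Connected E) (hba : Basic E) (hℓ : 1 ≤ ℓ) (hx : ((b : ℤ) - 1) * #E = n + ℓ) :
    numChains E + #(chainVertices E) = #(plainEdges E) := by
  have hmaps : ∀ w ∈ chainVertices E, chainClassOf E w ∈ (plainEdges E).image (chainClass E) :=
    fun w hw => by
      obtain ⟨e, -, -, he, -, hwe, -⟩ := exists_pair_of_mem_chainVertices hw
      obtain ⟨he, hC⟩ := mem_filter.1 (mem_fiber_of_mem_chainVertices hw he hwe)
      exact mem_image.2 ⟨e, he, hC⟩
  rw [numChains_eq_card_image, card_eq_sum_card_fiberwise hmaps,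
    card_eq_sum_card_image (chainClass E) (plainEdges E), card_eq_sum_ones, ← sum_add_distrib]
  refine sum_congr rfl fun C hC => ?_
  obtain ⟨e₀, he₀, rfl⟩ := mem_image.1 hC
  rw [card_fiber_plainEdges_eq hu hb hs hc hba hℓ hx he₀, add_comm]

lemma sum_degree_sharedVertices (hs : SmoothHG b E) (hu : Uniform b E) :
    ∑ v ∈ sharedVertices E, degree E v =
      ∑ v ∈ sharedVertices E, specialDegree E v + 2 * #(plainEdges E) := by
  rw [← sum_plainDegree_sharedVertices hs hu, ← sum_add_distrib]
  exact sum_congr rfl fun v _ => (specialDegree_add_plainDegree v).symm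

lemma sum_plainDegree_branchVertices_add (hs : SmoothHG b E) (hu : Uniform b E) :
    ∑ v ∈ branchVertices E, plainDegree E v + 2 * #(chainVertices E) = 2 * #(plainEdges E) := by
  rw [← sum_plainDegree_chainVertices, sum_branchVertices_add_sum_chainVertices,
    sum_plainDegree_sharedVertices hs hu]

lemma three_mul_card_branchVertices_le :
    3 * #(branchVertices E) ≤
      ∑ v ∈ branchVertices E, plainDegree E v + 2 * ∑ v ∈ sharedVertices E, specialDegree E v := by
  rw [← sum_specialDegree_branchVertices, mul_sum, ← sum_add_distrib, mul_comm, ← smul_eq_mul,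
    ← sum_const]
  exact sum_le_sum fun v hv => three_le_plainDegree_add_two_mul_specialDegree hv

-- `∑ specialDegree - #specialEdges - #branchVertices` is the excess `ℓ₀` of the subhypergraph
-- induced by the special vertices, so this is the identity `p = ℓ - ℓ₀`.
theorem numChains_add_sum_specialDegree (hu : Uniform b E) (hb : 2 ≤ b) (hs : SmoothHG b E)
    (hc : Connected E) (hba : Basic E) (hℓ : 1 ≤ ℓ) (hx : ((b : ℤ) - 1) * #E = n + ℓ) :
    numChains E + ∑ v ∈ sharedVertices E, specialDegree E v =
      ℓ + #(specialEdges E) + #(branchVertices E) := by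
  have hE : E.Nonempty := nonempty_iff_ne_empty.2 fun h => by simp [h] at hx; omega
  have hhand := hc.sum_degree_sharedVertices_add hu (by omega) hE
  have hdeg := sum_degree_sharedVertices hs hu
  have hedges := card_specialEdges_add_card_plainEdges (E := E)
  have hverts := card_branchVertices_add_card_chainVertices (E := E)
  have hchains := numChains_add_card_chainVertices hu hb hs hc hba hℓ hx
  zify at hhand hdeg hedges hverts hchains ⊢
  linarith

theorem numChains_le_three_mul (hu : Uniform b E) (hb : 2 ≤ b) (hs : SmoothHG b E)
    (hc : Connected E) (hba : Basic E) (hℓ : 1 ≤ ℓ) (hx : ((b : ℤ) - 1) * #E = n + ℓ) :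
    numChains E ≤ 3 * ℓ := by
  have := numChains_add_sum_specialDegree hu hb hs hc hba hℓ hx
  have := numChains_add_card_chainVertices hu hb hs hc hba hℓ hx
  have := sum_plainDegree_branchVertices_add hs hu
  have := three_mul_card_branchVertices_le (E := E)
  have := three_mul_card_specialEdges_le (E := E)
  omega

end General

/-! The hubs `(false, k)` and `(true, k)`, `k : Fin ℓ`, of a cubic multigraph are joined by the
arcs `(0, k)` and `(1, k)`, and `(false, k)` is joined to `(true, k + 1)` by the arc `(2, k)`.
Every arc gets a midpoint, and each half-arc, padded with `B` new vertices, becomes a hyperedge. -/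

namespace Necklace

variable (ℓ B : ℕ)

abbrev Hub := Bool × Fin ℓ

abbrev Arc := Fin 3 × Fin ℓ

abbrev HalfArc := Arc ℓ × Bool

abbrev Vertex := Hub ℓ ⊕ Arc ℓ ⊕ HalfArc ℓ × Fin B

-- Unfolding the nested sum, instance search would exceed `synthInstance.maxSize`.
instance : DecidableEq (Vertex ℓ B) := inferInstanceAs (DecidableEq (_ ⊕ _ ⊕ _))

variable {ℓ B}

def shift (s : Bool) (i : Fin 3) : Equiv.Perm (Fin ℓ) :=
  if s = true ∧ i = 2 then finRotate ℓ else 1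

def endpoint : HalfArc ℓ → Hub ℓ
  | ((i, k), s) => (s, shift s i k)

def piece (a : HalfArc ℓ) : Finset (Vertex ℓ B) :=
  insert (.inl (endpoint a)) (insert (.inr (.inl a.1)) (univ.image fun r => .inr (.inr (a, r))))

@[simp] lemma inl_mem_piece {x : Hub ℓ} {a : HalfArc ℓ} :
    (.inl x : Vertex ℓ B) ∈ piece a ↔ x = endpoint a := by simp [piece]

@[simp] lemma inr_inl_mem_piece {g : Arc ℓ} {a : HalfArc ℓ} :
    (.inr (.inl g) : Vertex ℓ B) ∈ piece a ↔ g = a.1 := by simp [piece]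

@[simp] lemma inr_inr_mem_piece {a' a : HalfArc ℓ} {r : Fin B} :
    (.inr (.inr (a', r)) : Vertex ℓ B) ∈ piece a ↔ a' = a := by simp [piece, eq_comm]

lemma card_piece (a : HalfArc ℓ) : #(piece (B := B) a) = B + 2 := by
  rw [piece, card_insert_of_notMem (by simp), card_insert_of_notMem (by simp),
    card_image_of_injective _ fun r r' h => by simpa using h, card_univ, Fintype.card_fin]

lemma piece_injective : Function.Injective (piece (ℓ := ℓ) (B := B)) := by
  rintro ⟨g, s⟩ ⟨g', s'⟩ h
  have hg := inr_inl_mem_piece.1 (h ▸ inr_inl_mem_piece.2 rfl : (.inr (.inl g) : Vertex ℓ B) ∈ _)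
  have hs := inl_mem_piece.1 (h ▸ inl_mem_piece.2 rfl : (.inl (endpoint (g, s)) : Vertex ℓ B) ∈ _)
  simp only [endpoint, Prod.mk.injEq] at hg hs
  rw [hg, hs.1]

variable (ℓ B) in
noncomputable def label : Vertex ℓ B ≃ Fin (Fintype.card (Vertex ℓ B)) := Fintype.equivFin _

noncomputable def hyperedge (a : HalfArc ℓ) : Finset (Fin (Fintype.card (Vertex ℓ B))) :=
  (piece a).map (label ℓ B).toEmbedding

variable (ℓ B) in
noncomputable def hypergraph : Finset (Finset (Fin (Fintype.card (Vertex ℓ B)))) :=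
  univ.image hyperedge

lemma label_mem_hyperedge {v : Vertex ℓ B} {a : HalfArc ℓ} :
    label ℓ B v ∈ hyperedge a ↔ v ∈ piece a := by
  simp [hyperedge]

lemma hyperedge_injective : Function.Injective (hyperedge (ℓ := ℓ) (B := B)) :=
  (map_injective _).comp piece_injective

lemma mem_hypergraph {e : Finset (Fin (Fintype.card (Vertex ℓ B)))} :
    e ∈ hypergraph ℓ B ↔ ∃ a, hyperedge a = e := by
  simp [hypergraph]

lemma hyperedge_mem_hypergraph (a : HalfArc ℓ) : hyperedge a ∈ hypergraph ℓ B :=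
  mem_hypergraph.2 ⟨a, rfl⟩

lemma degree_label (v : Vertex ℓ B) :
    degree (hypergraph ℓ B) (label ℓ B v) = #{a | v ∈ piece (B := B) a} := by
  rw [degree, hypergraph, filter_image, card_image_of_injective _ hyperedge_injective]
  simp only [label_mem_hyperedge]

def port : Hub ℓ → Fin 3 → HalfArc ℓ
  | (s, k), i => ((i, (shift s i).symm k), s)

lemma endpoint_port (x : Hub ℓ) (i : Fin 3) : endpoint (port x i) = x := by
  simp [port, endpoint]

lemma three_le_degree_hub (x : Hub ℓ) : 3 ≤ degree (hypergraph ℓ B) (label ℓ B (.inl x)) := by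
  rw [degree_label]
  calc 3 = #(univ : Finset (Fin 3)) := by simp
    _ ≤ _ := card_le_card_of_injOn (port x) (fun i _ => by simp [endpoint_port])
        fun i _ j _ h => by obtain ⟨s, k⟩ := x; simpa [port] using congrArg (·.1.1) h

lemma degree_mid (g : Arc ℓ) : degree (hypergraph ℓ B) (label ℓ B (.inr (.inl g))) = 2 := by
  rw [degree_label]
  have : ({a | (.inr (.inl g) : Vertex ℓ B) ∈ piece (B := B) a} : Finset _) =
      {(g, false), (g, true)} := by
    ext ⟨g', s⟩
    cases s <;> simp [eq_comm]
  rw [this, card_pair (by simp)]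

lemma degree_pad (a : HalfArc ℓ) (r : Fin B) :
    degree (hypergraph ℓ B) (label ℓ B (.inr (.inr (a, r)))) = 1 := by
  rw [degree_label]
  simp [filter_eq]

lemma mem_hyperedge {a : HalfArc ℓ} {x : Fin (Fintype.card (Vertex ℓ B))} :
    x ∈ hyperedge a ↔ x = label ℓ B (.inl (endpoint a)) ∨ x = label ℓ B (.inr (.inl a.1)) ∨
      ∃ r, x = label ℓ B (.inr (.inr (a, r))) := by
  obtain ⟨v, rfl⟩ := (label ℓ B).surjective x
  rw [label_mem_hyperedge]
  simp [piece, eq_comm]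

lemma eq_endpoint_or_eq_mid_of_two_le_degree {a : HalfArc ℓ}
    {x : Fin (Fintype.card (Vertex ℓ B))} (hx : x ∈ hyperedge a)
    (h2 : 2 ≤ degree (hypergraph ℓ B) x) :
    x = label ℓ B (.inl (endpoint a)) ∨ x = label ℓ B (.inr (.inl a.1)) := by
  rcases mem_hyperedge.1 hx with h | h | ⟨r, rfl⟩
  · exact .inl h
  · exact .inr h
  · rw [degree_pad] at h2; omega

lemma uniform : Uniform (B + 2) (hypergraph ℓ B) := by
  intro e he
  obtain ⟨a, rfl⟩ := mem_hypergraph.1 he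
  rw [hyperedge, card_map, card_piece]

lemma smooth : SmoothHG (B + 2) (hypergraph ℓ B) := by
  rintro ⟨e, he, S, hSe, hS, hdeg⟩
  obtain ⟨a, rfl⟩ := mem_hypergraph.1 he
  have hpads : S ⊆ univ.image fun r => label ℓ B (.inr (.inr (a, r))) := by
    intro x hx
    have h1 := hdeg x hx
    rcases mem_hyperedge.1 (hSe hx) with rfl | rfl | ⟨r, rfl⟩
    · have := three_le_degree_hub (B := B) (endpoint a); omega
    · rw [degree_mid] at h1; omega
    · exact mem_image_of_mem _ (mem_univ r)
  have := (card_le_card hpads).trans card_image_le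
  rw [card_univ, Fintype.card_fin] at this
  omega

lemma not_specialEdge (e : Finset (Fin (Fintype.card (Vertex ℓ B)))) :
    ¬ SpecialEdge (hypergraph ℓ B) e := by
  rintro ⟨he, h3⟩
  obtain ⟨a, rfl⟩ := mem_hypergraph.1 he
  have hsub : {x ∈ hyperedge a | 2 ≤ degree (hypergraph ℓ B) x} ⊆
      {label ℓ B (.inl (endpoint a)), label ℓ B (.inr (.inl a.1))} := fun x hx => by
    have := eq_endpoint_or_eq_mid_of_two_le_degree (mem_filter.1 hx).1 (mem_filter.1 hx).2
    simpa using this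
  have := (card_le_card hsub).trans card_le_two
  omega

lemma specialVtx_iff {x : Fin (Fintype.card (Vertex ℓ B))} :
    SpecialVtx (hypergraph ℓ B) x ↔ 3 ≤ degree (hypergraph ℓ B) x := by
  simp [SpecialVtx, not_specialEdge]

lemma card_branchVertices : #(branchVertices (hypergraph ℓ B)) = 2 * ℓ := by
  have : branchVertices (hypergraph ℓ B) = univ.image fun x : Hub ℓ => label ℓ B (.inl x) := by
    ext x
    obtain ⟨v, rfl⟩ := (label ℓ B).surjective x
    simp only [branchVertices, mem_filter, mem_sharedVertices, specialVtx_iff, mem_image,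
      mem_univ, true_and, EmbeddingLike.apply_eq_iff_eq]
    rcases v with x | g | ⟨a, r⟩
    · have := three_le_degree_hub (B := B) x
      exact iff_of_true ⟨by omega, this⟩ ⟨x, rfl⟩
    · simp [degree_mid]
    · simp [degree_pad]
  rw [this, card_image_of_injective _ fun x y h => Sum.inl_injective ((label ℓ B).injective h)]
  simp [two_mul]

lemma basic : Basic (hypergraph ℓ B) := by
  intro e he _
  obtain ⟨⟨g, s⟩, rfl⟩ := mem_hypergraph.1 he
  have hsub : {f | ReflTransGen (chainLink (hypergraph ℓ B)) (hyperedge (g, s)) f} ⊆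
      Set.range fun s' => hyperedge (g, s') := by
    intro f hf
    induction hf with
    | refl => exact ⟨s, rfl⟩
    | tail _ hlink ih =>
      obtain ⟨s', rfl⟩ := ih
      obtain ⟨-, hf, -, -, x, hx, hxf, hx2, -⟩ := hlink
      obtain ⟨a, rfl⟩ := mem_hypergraph.1 hf
      rcases eq_endpoint_or_eq_mid_of_two_le_degree hx hx2.ge with rfl | rfl
      · have := three_le_degree_hub (B := B) (endpoint (g, s')); omega
      · rcases mem_hyperedge.1 hxf with h | h | ⟨r, h⟩ <;> simp at h
        exact ⟨a.2, by rw [h]⟩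
  calc _ ≤ (Set.range fun s' => hyperedge (B := B) (g, s')).ncard :=
        Set.ncard_le_ncard hsub (Set.finite_range _)
    _ = 2 := by
        rw [Set.ncard_range_of_injective fun s s' h => by simpa using hyperedge_injective h]
        simp

lemma label_endpoint_mem (a : HalfArc ℓ) : label ℓ B (.inl (endpoint a)) ∈ hyperedge a :=
  mem_hyperedge.2 (.inl rfl)

lemma label_mid_mem (a : HalfArc ℓ) : label ℓ B (.inr (.inl a.1)) ∈ hyperedge a :=
  mem_hyperedge.2 (.inr (.inl rfl))

lemma link_of_mem {a : HalfArc ℓ} {x y : Fin (Fintype.card (Vertex ℓ B))} (hx : x ∈ hyperedge a)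
    (hy : y ∈ hyperedge a) : link (hypergraph ℓ B) x y :=
  ⟨_, hyperedge_mem_hypergraph a, hx, hy⟩

lemma reflTransGen_endpoints (g : Arc ℓ) :
    ReflTransGen (link (hypergraph ℓ B)) (label ℓ B (.inl (endpoint (g, false))))
      (label ℓ B (.inl (endpoint (g, true)))) :=
  (ReflTransGen.single (link_of_mem (label_endpoint_mem _) (label_mid_mem _))).tail
    (link_of_mem (label_mid_mem (g, true)) (label_endpoint_mem _))

lemma reflTransGen_hub_false (x : Hub ℓ) :
    ReflTransGen (link (hypergraph ℓ B)) (label ℓ B (.inl x)) (label ℓ B (.inl (false, x.2))) := by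
  obtain ⟨_ | _, k⟩ := x
  · exact ReflTransGen.refl
  · simpa [endpoint, shift] using Std.Symm.symm _ _ (reflTransGen_endpoints (B := B) (0, k))

lemma reflTransGen_hub_finRotate (k : Fin ℓ) :
    ReflTransGen (link (hypergraph ℓ B)) (label ℓ B (.inl (false, k)))
      (label ℓ B (.inl (false, finRotate ℓ k))) := by
  have := reflTransGen_endpoints (B := B) (2, k)
  simp only [endpoint, shift] at this
  simpa using this.trans (reflTransGen_hub_false (true, finRotate ℓ k))

lemma reflTransGen_hub_zero (m : ℕ) (k : Fin (m + 1)) :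
    ReflTransGen (link (hypergraph (m + 1) B)) (label (m + 1) B (.inl (false, k)))
      (label (m + 1) B (.inl (false, 0))) := by
  induction k using Fin.induction with
  | zero => exact ReflTransGen.refl
  | succ k ih =>
    have := reflTransGen_hub_finRotate (B := B) k.castSucc
    rw [finRotate_apply, Fin.coeSucc_eq_succ] at this
    exact (Std.Symm.symm _ _ this).trans ih

lemma exists_reflTransGen_hub (v : Vertex ℓ B) :
    ∃ x, ReflTransGen (link (hypergraph ℓ B)) (label ℓ B v) (label ℓ B (.inl x)) := by
  rcases v with x | g | ⟨a, r⟩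
  · exact ⟨x, ReflTransGen.refl⟩
  · exact ⟨_, .single (link_of_mem (label_mid_mem (g, false)) (label_endpoint_mem _))⟩
  · exact ⟨_, .single (link_of_mem (mem_hyperedge.2 (.inr (.inr ⟨r, rfl⟩)))
      (label_endpoint_mem a))⟩

lemma connected : Connected (hypergraph ℓ B) := by
  intro x y
  obtain ⟨v, rfl⟩ := (label ℓ B).surjective x
  obtain ⟨w, rfl⟩ := (label ℓ B).surjective y
  obtain ⟨p, hp⟩ := exists_reflTransGen_hub v
  obtain ⟨q, hq⟩ := exists_reflTransGen_hub w
  refine hp.trans (ReflTransGen.trans ?_ (Std.Symm.symm _ _ hq))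
  cases ℓ with
  | zero => exact p.2.elim0
  | succ m =>
    exact ((reflTransGen_hub_false p).trans (reflTransGen_hub_zero m _)).trans
      (Std.Symm.symm _ _ ((reflTransGen_hub_false q).trans (reflTransGen_hub_zero m _)))

lemma card_hypergraph : #(hypergraph ℓ B) = 6 * ℓ := by
  rw [hypergraph, card_image_of_injective _ hyperedge_injective, card_univ]
  simp only [Fintype.card_prod, Fintype.card_fin, Fintype.card_bool]
  ring

lemma card_vertex : Fintype.card (Vertex ℓ B) = 5 * ℓ + 6 * ℓ * B := by
  simp only [Fintype.card_sum, Fintype.card_prod, Fintype.card_fin, Fintype.card_bool]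
  ring

lemma excess_hypergraph :
    (((B + 2 : ℕ) : ℤ) - 1) * #(hypergraph ℓ B) = Fintype.card (Vertex ℓ B) + ℓ := by
  rw [card_hypergraph, card_vertex]
  push_cast
  ring

open Classical in
theorem numChains_hypergraph (hℓ : 1 ≤ ℓ) : numChains (hypergraph ℓ B) = 3 * ℓ := by
  have hspecial : specialEdges (hypergraph ℓ B) = ∅ :=
    filter_eq_empty_iff.2 fun e _ => not_specialEdge e
  have := numChains_add_sum_specialDegree (E := hypergraph ℓ B) uniform (by omega) smooth connected
    basic hℓ excess_hypergraph
  simp only [specialDegree, hspecial, filter_empty, card_empty, sum_const_zero,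
    card_branchVertices] at this
  omega

end Necklace

/-- In a `b`-uniform basic complex component of excess `ℓ ≥ 1` (a smooth
connected hypergraph with all chains of minimal length), the number `p` of
chains satisfies `p ≤ 3ℓ`, and the bound is attained by some component. -/
theorem chains_le_three_excess (b ℓ : ℕ) (hb : 2 ≤ b) (hℓ : 1 ≤ ℓ) :
    (∀ (n : ℕ) (E : Finset (Finset (Fin n))), Uniform b E → Connected E →
        SmoothHG b E → Basic E → ((b : ℤ) - 1) * E.card = (n : ℤ) + ℓ →
        numChains E ≤ 3 * ℓ) ∧
    (∃ (n : ℕ) (E : Finset (Finset (Fin n))), Uniform b E ∧ Connected E ∧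
        SmoothHG b E ∧ Basic E ∧ ((b : ℤ) - 1) * E.card = (n : ℤ) + ℓ ∧
        numChains E = 3 * ℓ) := by
  refine ⟨fun n E hu hc hs hba hx => numChains_le_three_mul hu hb hs hc hba hℓ hx, ?_⟩
  obtain ⟨B, rfl⟩ : ∃ B, b = B + 2 := ⟨b - 2, by omega⟩
  exact ⟨_, Necklace.hypergraph ℓ B, Necklace.uniform, Necklace.connected, Necklace.smooth,
    Necklace.basic, Necklace.excess_hypergraph, Necklace.numChains_hypergraph hℓ⟩
end
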